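/- arXiv:1411.0415 — 4 statements merged into one kernel-verified Lean document; each statement's English description precedes it below -/
import Mathlib

section
/- Let k ≥ 2 and n ≥ k+1, and let A ⊆ 2^[n] be a family that contains neither Y_k nor Y_k' as a weak subposet, with ∅ ∉ A and [n] ∉ A. Then the sum over all A ∈ A of 1/C(n,|A|) is at most k. -/
/-!
A permutation `σ` of `Fin n` encodes the maximal chain
`∅ = σ.initSeg 0 ⊂ σ.initSeg 1 ⊂ ⋯ ⊂ σ.initSeg n = [n]`, and a set `A` lies on
`|A|! (n - |A|)!` of these chains, so it suffices to show that on average a chain meets `𝒜`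
in at most `k` sets. As `𝒜` has no `Y_k`, no chain meets it in more than `k + 1` sets.
If a chain meets `𝒜` in exactly `A₀ ⊂ ⋯ ⊂ A_k`, then `A_k` is the only member of `𝒜` above
`A_{k-1}` (no `Y_k`) and `A₀` the only one below `A₁` (no `Y_k'`). Swapping two entries of the
permutation inside the block `[0, |A₁|)` across position `|A₀|`, and two inside `[|A_{k-1}|, n)`
across `|A_k|`, gives a chain meeting `𝒜` exactly in `A₁, …, A_{k-1}`, from which `|A₁|` and
`|A_{k-1}|`, hence the swaps and the original chain, can be read off. This injection from chains
with `k + 1` hits into chains with `k - 1` hits yields the bound.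
-/

open Finset

/-- The family `𝒜` contains `Y_k` as a (weak) subposet: `k + 2` pairwise distinct sets
`A 1 ⊆ A 2 ⊆ ⋯ ⊆ A k`, `A k ⊆ B`, `A k ⊆ C`, all in `𝒜`. -/
def ContainsYk {n : ℕ} (k : ℕ) (𝒜 : Finset (Finset (Fin n))) : Prop :=
  ∃ (A : Fin k → Finset (Fin n)) (B C : Finset (Fin n)),
    (∀ i, A i ∈ 𝒜) ∧ B ∈ 𝒜 ∧ C ∈ 𝒜 ∧
    Function.Injective A ∧ (∀ i, A i ≠ B) ∧ (∀ i, A i ≠ C) ∧ B ≠ C ∧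
    (∀ i j : Fin k, i ≤ j → A i ⊆ A j) ∧ (∀ i, A i ⊆ B) ∧ (∀ i, A i ⊆ C)

/-- The family `𝒜` contains `Y_k'` as a (weak) subposet: `k + 2` pairwise distinct sets
`A k ⊆ A (k-1) ⊆ ⋯ ⊆ A 1`, `B ⊆ A k`, `C ⊆ A k`, all in `𝒜`. -/
def ContainsYk' {n : ℕ} (k : ℕ) (𝒜 : Finset (Finset (Fin n))) : Prop :=
  ∃ (A : Fin k → Finset (Fin n)) (B C : Finset (Fin n)),
    (∀ i, A i ∈ 𝒜) ∧ B ∈ 𝒜 ∧ C ∈ 𝒜 ∧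
    Function.Injective A ∧ (∀ i, A i ≠ B) ∧ (∀ i, A i ≠ C) ∧ B ≠ C ∧
    (∀ i j : Fin k, i ≤ j → A j ⊆ A i) ∧ (∀ i, B ⊆ A i) ∧ (∀ i, C ⊆ A i)

open Equiv
open scoped Nat

section Subposets

variable {n k : ℕ} {𝒜 : Finset (Finset (Fin n))} {A : Fin k → Finset (Fin n)}
  {B C : Finset (Fin n)}

theorem containsYk_of_strictMono (hA : StrictMono A) (hA𝒜 : ∀ i, A i ∈ 𝒜) (hB : B ∈ 𝒜)
    (hC : C ∈ 𝒜) (hBC : B ≠ C) (hAB : ∀ i, A i ⊂ B) (hAC : ∀ i, A i ⊂ C) :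
    ContainsYk k 𝒜 :=
  ⟨A, B, C, hA𝒜, hB, hC, hA.injective, fun i => (hAB i).ne, fun i => (hAC i).ne, hBC,
    fun _ _ h => hA.monotone h, fun i => (hAB i).subset, fun i => (hAC i).subset⟩

theorem containsYk'_of_strictAnti (hA : StrictAnti A) (hA𝒜 : ∀ i, A i ∈ 𝒜) (hB : B ∈ 𝒜)
    (hC : C ∈ 𝒜) (hBC : B ≠ C) (hBA : ∀ i, B ⊂ A i) (hCA : ∀ i, C ⊂ A i) :
    ContainsYk' k 𝒜 :=
  ⟨A, B, C, hA𝒜, hB, hC, hA.injective, fun i => (hBA i).ne', fun i => (hCA i).ne', hBC,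
    fun _ _ h => hA.antitone h, fun i => (hBA i).subset, fun i => (hCA i).subset⟩

end Subposets

theorem sum_le_mul_card_of_injOn {ι : Type*} [Fintype ι] [DecidableEq ι] {f : ι → ℕ} {k : ℕ}
    {g : ι → ι} (hf : ∀ i, f i ≤ k + 1) (hg : ∀ i, f i = k + 1 → f (g i) < k)
    (hinj : Set.InjOn g {i | f i = k + 1}) : ∑ i, f i ≤ k * Fintype.card ι := by
  set F : Finset ι := {i | f i = k + 1}
  have hF (i : ι) : i ∈ F ↔ f i = k + 1 := by simp [F]
  have hpt (i : ι) :
      f i + (if i ∈ F.image g then 1 else 0) ≤ k + (if i ∈ F then 1 else 0) := by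
    have := hf i
    by_cases hig : i ∈ F.image g
    · obtain ⟨j, hj, rfl⟩ := mem_image.1 hig
      have := hg j ((hF j).1 hj)
      split_ifs <;> omega
    · split_ifs with hiF <;> rw [hF] at hiF <;> omega
  have hsum := sum_le_sum fun i (_ : i ∈ univ) => hpt i
  simp only [sum_add_distrib, sum_boole, filter_mem_eq_inter, univ_inter, sum_const, card_univ,
    smul_eq_mul, Nat.cast_id] at hsum
  rw [card_image_of_injOn (by simpa [F] using hinj)] at hsum
  linarith

namespace Finset

variable {s : Finset ℕ} {i j : ℕ}

theorem card_toFinset_ofPred_mem (hf : (Set.ofPred (· ∈ s)).Finite) : #hf.toFinset = #s := by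
  congr; ext; simp

theorem nth_mem_of_lt_card (hi : i < #s) : Nat.nth (· ∈ s) i ∈ s :=
  Nat.nth_mem_of_lt_card s.finite_toSet (by rwa [card_toFinset_ofPred_mem])

theorem nth_lt_nth_of_lt_card (hij : i < j) (hj : j < #s) : Nat.nth (· ∈ s) i < Nat.nth (· ∈ s) j :=
  Nat.nth_lt_nth_of_lt_card s.finite_toSet hij (by rwa [card_toFinset_ofPred_mem])

end Finset

section PermMapsOnto

variable {α : Type*} [Fintype α] [DecidableEq α]

def permMapsOntoEquiv (s t : Finset α) :
    {σ : Perm α // ∀ x, x ∈ s ↔ σ x ∈ t} ≃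
      ({x // x ∈ s} ≃ {x // x ∈ t}) × ({x // x ∉ s} ≃ {x // x ∉ t}) where
  toFun σ := (σ.1.subtypeEquiv σ.2, σ.1.subtypeEquiv fun x => not_congr (σ.2 x))
  invFun e := ⟨subtypeCongr e.1 e.2, fun x => by
    by_cases hx : x ∈ s <;> simp [subtypeCongr, hx, (e.1 _).2, (e.2 _).2]⟩
  left_inv σ := by
    ext x; by_cases hx : x ∈ s <;> simp [subtypeCongr, hx]
  right_inv e := by
    ext x <;> simp [subtypeCongr, x.2]

theorem card_perm_mapsOnto {s t : Finset α} (hst : #s = #t) :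
    #{σ : Perm α | ∀ x, x ∈ s ↔ σ x ∈ t} = (#s)! * (Fintype.card α - #s)! := by
  rw [← Fintype.card_subtype, Fintype.card_congr (permMapsOntoEquiv s t), Fintype.card_prod,
    Fintype.card_equiv (Fintype.equivOfCardEq (by simpa using hst)),
    Fintype.card_equiv (Fintype.equivOfCardEq (by simp [Fintype.card_subtype_compl, hst]))]
  simp [Fintype.card_subtype_compl]

end PermMapsOnto

namespace Equiv.Perm

variable {n : ℕ}

def initSeg (σ : Perm (Fin n)) (m : ℕ) : Finset (Fin n) :=
  {x | (σ.symm x : ℕ) < m}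

variable {σ τ : Perm (Fin n)} {m : ℕ}

theorem mem_initSeg {x : Fin n} : x ∈ σ.initSeg m ↔ (σ.symm x : ℕ) < m := by
  simp [initSeg]

theorem initSeg_eq_iff {A : Finset (Fin n)} :
    σ.initSeg m = A ↔ ∀ p : Fin n, (p : ℕ) < m ↔ σ p ∈ A := by
  simp only [Finset.ext_iff, mem_initSeg]
  exact ⟨fun h p => by simpa using h (σ p), fun h x => by simpa using h (σ.symm x)⟩

theorem card_initSeg (hm : m ≤ n) : #(σ.initSeg m) = m := by
  have : σ.initSeg m = ({p : Fin n | (p : ℕ) < m} : Finset (Fin n)).map σ.toEmbedding := by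
    ext x; simp [mem_initSeg]
  rw [this, card_map, Fin.card_filter_val_lt, min_eq_right hm]

theorem initSeg_strictMonoOn : StrictMonoOn σ.initSeg (Set.Iic n) := by
  intro m hm m' hm' hlt
  refine lt_of_le_of_ne (fun x hx => ?_) fun h => ?_
  · rw [mem_initSeg] at hx ⊢; omega
  · have := congrArg card h
    rw [card_initSeg hm, card_initSeg hm'] at this
    omega

theorem initSeg_zero : σ.initSeg 0 = ∅ := by
  ext x; simp [mem_initSeg]

theorem initSeg_self : σ.initSeg n = univ := by
  ext x; simp [mem_initSeg]

theorem initSeg_mul_of_forall (h : ∀ p : Fin n, (τ.symm p : ℕ) < m ↔ (p : ℕ) < m) :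
    (σ * τ).initSeg m = σ.initSeg m := by
  ext x; simp [mem_initSeg, Perm.mul_def, h]

def posSwap (i j : ℕ) : Perm (Fin n) :=
  if h : i < n ∧ j < n then swap ⟨i, h.1⟩ ⟨j, h.2⟩ else 1

theorem initSeg_mul_posSwap {i j : ℕ} (h : i < m ↔ j < m) :
    (σ * posSwap i j).initSeg m = σ.initSeg m := by
  refine initSeg_mul_of_forall fun p => ?_
  unfold posSwap
  split_ifs with hij
  · rw [symm_swap, swap_apply_def]
    split_ifs with h1 h2 <;> simp_all [Fin.ext_iff]
  · rfl

theorem initSeg_mul_posSwap_ne {i j : ℕ} (hi : i < m) (hm : m ≤ j) (hj : j < n) :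
    (σ * posSwap i j).initSeg m ≠ σ.initSeg m := by
  have hin : i < n := by omega
  intro h
  have hx : σ ⟨j, hj⟩ ∈ (σ * posSwap i j).initSeg m := by
    simp [mem_initSeg, posSwap, hin, hj, Perm.mul_def, swap_apply_right, hi]
  rw [h, mem_initSeg, symm_apply_apply] at hx
  exact absurd hx (by simpa using hm)

theorem card_perm_initSeg_eq (A : Finset (Fin n)) :
    #{σ : Perm (Fin n) | σ.initSeg #A = A} = (#A)! * (n - #A)! := by
  have hP : #({p : Fin n | (p : ℕ) < #A} : Finset (Fin n)) = #A := by
    rw [Fin.card_filter_val_lt, min_eq_right (by simpa using card_le_univ A)]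
  simpa [initSeg_eq_iff, hP] using card_perm_mapsOnto hP

end Equiv.Perm

section HitSizes

open Perm

variable {n k : ℕ} {𝒜 : Finset (Finset (Fin n))} {σ : Perm (Fin n)} {i j m : ℕ}

variable (𝒜) in
def hitSizes (σ : Perm (Fin n)) : Finset ℕ :=
  {m ∈ range (n + 1) | σ.initSeg m ∈ 𝒜}

variable (𝒜) in
noncomputable def hitSize (σ : Perm (Fin n)) (i : ℕ) : ℕ :=
  Nat.nth (· ∈ hitSizes 𝒜 σ) i

theorem mem_hitSizes : m ∈ hitSizes 𝒜 σ ↔ m ≤ n ∧ σ.initSeg m ∈ 𝒜 := by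
  simp [hitSizes]

theorem hitSize_mem (hi : i < #(hitSizes 𝒜 σ)) : hitSize 𝒜 σ i ∈ hitSizes 𝒜 σ :=
  nth_mem_of_lt_card hi

theorem hitSize_le (hi : i < #(hitSizes 𝒜 σ)) : hitSize 𝒜 σ i ≤ n :=
  (mem_hitSizes.1 (hitSize_mem hi)).1

theorem card_initSeg_hitSize (hi : i < #(hitSizes 𝒜 σ)) :
    #(σ.initSeg (hitSize 𝒜 σ i)) = hitSize 𝒜 σ i :=
  card_initSeg (hitSize_le hi)

theorem initSeg_hitSize_mem (hi : i < #(hitSizes 𝒜 σ)) : σ.initSeg (hitSize 𝒜 σ i) ∈ 𝒜 :=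
  (mem_hitSizes.1 (hitSize_mem hi)).2

theorem hitSize_lt_hitSize (hij : i < j) (hj : j < #(hitSizes 𝒜 σ)) :
    hitSize 𝒜 σ i < hitSize 𝒜 σ j :=
  nth_lt_nth_of_lt_card hij hj

theorem hitSize_le_hitSize (hij : i ≤ j) (hj : j < #(hitSizes 𝒜 σ)) :
    hitSize 𝒜 σ i ≤ hitSize 𝒜 σ j := by
  rcases hij.eq_or_lt with rfl | hij
  · rfl
  · exact (hitSize_lt_hitSize hij hj).le

theorem initSeg_hitSize_ssubset (hij : i < j) (hj : j < #(hitSizes 𝒜 σ)) :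
    σ.initSeg (hitSize 𝒜 σ i) ⊂ σ.initSeg (hitSize 𝒜 σ j) :=
  initSeg_strictMonoOn (hitSize_le (hij.trans hj)) (hitSize_le hj) (hitSize_lt_hitSize hij hj)

theorem initSeg_hitSize_subset (hij : i ≤ j) (hj : j < #(hitSizes 𝒜 σ)) :
    σ.initSeg (hitSize 𝒜 σ i) ⊆ σ.initSeg (hitSize 𝒜 σ j) :=
  (initSeg_strictMonoOn.monotoneOn (hitSize_le (hij.trans_lt hj)) (hitSize_le hj)
    (hitSize_le_hitSize hij hj))

theorem card_hitSizes_le (hY : ¬ ContainsYk k 𝒜) (σ : Perm (Fin n)) :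
    #(hitSizes 𝒜 σ) ≤ k + 1 := by
  by_contra! h
  exact hY <| containsYk_of_strictMono (A := fun i : Fin k => σ.initSeg (hitSize 𝒜 σ i))
    (fun i j hij => initSeg_hitSize_ssubset hij (by omega))
    (fun i => initSeg_hitSize_mem (by omega)) (initSeg_hitSize_mem (i := k) (by omega))
    (initSeg_hitSize_mem (i := k + 1) (by omega))
    (initSeg_hitSize_ssubset (Nat.lt_succ_self k) (by omega)).ne
    (fun i => initSeg_hitSize_ssubset i.2 (by omega))
    (fun i => initSeg_hitSize_ssubset (by omega) (by omega))

theorem card_hitSizes_eq (𝒜 : Finset (Finset (Fin n))) (σ : Perm (Fin n)) :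
    #(hitSizes 𝒜 σ) = #{A ∈ 𝒜 | σ.initSeg #A = A} := by
  refine card_nbij' σ.initSeg card (fun m hm => ?_) (fun A hA => ?_)
    (fun m hm => card_initSeg (mem_hitSizes.1 hm).1) (fun A hA => (mem_filter.1 hA).2)
  · obtain ⟨hmn, hm𝒜⟩ := mem_hitSizes.1 hm
    simpa [card_initSeg hmn] using hm𝒜
  · obtain ⟨hA𝒜, hA⟩ := mem_filter.1 hA
    exact mem_hitSizes.2 ⟨by simpa using card_le_univ A, by rwa [hA]⟩

theorem sum_card_hitSizes (𝒜 : Finset (Finset (Fin n))) :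
    ∑ σ : Perm (Fin n), #(hitSizes 𝒜 σ) = ∑ A ∈ 𝒜, (#A)! * (n - #A)! := by
  simp_rw [card_hitSizes_eq, card_filter, ← card_perm_initSeg_eq, card_filter]
  exact sum_comm

variable (hσ : #(hitSizes 𝒜 σ) = k + 1)
include hσ

theorem eq_initSeg_hitSize_zero (hY' : ¬ ContainsYk' k 𝒜) {X : Finset (Fin n)} (hX : X ∈ 𝒜)
    (hX1 : X ⊂ σ.initSeg (hitSize 𝒜 σ 1)) : X = σ.initSeg (hitSize 𝒜 σ 0) := by
  by_contra hne
  exact hY' <| containsYk'_of_strictAnti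
    (A := fun i : Fin k => σ.initSeg (hitSize 𝒜 σ (k - i)))
    (fun i j hij => initSeg_hitSize_ssubset (by omega) (by omega))
    (fun i => initSeg_hitSize_mem (by omega)) hX (initSeg_hitSize_mem (by omega)) hne
    (fun i => hX1.trans_subset (initSeg_hitSize_subset (by omega) (by omega)))
    (fun i => initSeg_hitSize_ssubset (by omega) (by omega))

theorem eq_initSeg_hitSize_self (hY : ¬ ContainsYk k 𝒜) {X : Finset (Fin n)} (hX : X ∈ 𝒜)
    (hX1 : σ.initSeg (hitSize 𝒜 σ (k - 1)) ⊂ X) : X = σ.initSeg (hitSize 𝒜 σ k) := by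
  by_contra hne
  exact hY <| containsYk_of_strictMono (A := fun i : Fin k => σ.initSeg (hitSize 𝒜 σ i))
    (fun i j hij => initSeg_hitSize_ssubset hij (by omega))
    (fun i => initSeg_hitSize_mem (by omega)) hX (initSeg_hitSize_mem (by omega)) hne
    (fun i => (initSeg_hitSize_subset (by omega) (by omega)).trans_ssubset hX1)
    (fun i => initSeg_hitSize_ssubset i.2 (by omega))

theorem hitSize_zero_pos (h0 : ∅ ∉ 𝒜) : 0 < hitSize 𝒜 σ 0 := by
  refine Nat.pos_of_ne_zero fun h => h0 ?_
  simpa [h, initSeg_zero] using initSeg_hitSize_mem (σ := σ) (𝒜 := 𝒜) (i := 0) (by omega)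

theorem hitSize_self_lt (h1 : (univ : Finset (Fin n)) ∉ 𝒜) : hitSize 𝒜 σ k < n := by
  refine (hitSize_le (by omega)).lt_of_ne fun h => h1 ?_
  simpa [h, initSeg_self] using initSeg_hitSize_mem (σ := σ) (𝒜 := 𝒜) (i := k) (by omega)

end HitSizes

section Surgery

open Perm

variable {n k : ℕ} {𝒜 : Finset (Finset (Fin n))} {σ : Perm (Fin n)} {m : ℕ}

variable (k 𝒜) in
noncomputable def surgery (σ : Perm (Fin n)) : Perm (Fin n) :=
  σ * posSwap 0 (hitSize 𝒜 σ 1 - 1) * posSwap (hitSize 𝒜 σ (k - 1)) (n - 1)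

variable (hk : 2 ≤ k) (hσ : #(hitSizes 𝒜 σ) = k + 1)
include hk hσ

theorem initSeg_surgery (hm1 : hitSize 𝒜 σ 1 ≤ m) (hm2 : m ≤ hitSize 𝒜 σ (k - 1)) :
    (surgery k 𝒜 σ).initSeg m = σ.initSeg m := by
  have := hitSize_lt_hitSize (σ := σ) (𝒜 := 𝒜) (i := 0) (j := 1) (by omega) (by omega)
  have := hitSize_lt_hitSize (σ := σ) (𝒜 := 𝒜) (i := k - 1) (j := k) (by omega) (by omega)
  have := hitSize_le (σ := σ) (𝒜 := 𝒜) (i := k) (by omega)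
  rw [surgery, initSeg_mul_posSwap (by omega), initSeg_mul_posSwap (by omega)]

theorem initSeg_surgery_hitSize_zero_ne (h0 : ∅ ∉ 𝒜) :
    (surgery k 𝒜 σ).initSeg (hitSize 𝒜 σ 0) ≠ σ.initSeg (hitSize 𝒜 σ 0) := by
  have := hitSize_lt_hitSize (σ := σ) (𝒜 := 𝒜) (i := 0) (j := 1) (by omega) (by omega)
  have := hitSize_lt_hitSize (σ := σ) (𝒜 := 𝒜) (i := 0) (j := k - 1) (by omega) (by omega)
  have := hitSize_le (σ := σ) (𝒜 := 𝒜) (i := 1) (by omega)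
  have := hitSize_zero_pos hσ h0
  rw [surgery, initSeg_mul_posSwap (by omega)]
  exact initSeg_mul_posSwap_ne (by omega) (by omega) (by omega)

theorem initSeg_surgery_hitSize_self_ne (h1 : (univ : Finset (Fin n)) ∉ 𝒜) :
    (surgery k 𝒜 σ).initSeg (hitSize 𝒜 σ k) ≠ σ.initSeg (hitSize 𝒜 σ k) := by
  have := hitSize_lt_hitSize (σ := σ) (𝒜 := 𝒜) (i := 1) (j := k) (by omega) (by omega)
  have := hitSize_lt_hitSize (σ := σ) (𝒜 := 𝒜) (i := k - 1) (j := k) (by omega) (by omega)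
  have := hitSize_self_lt hσ h1
  rw [surgery, ← initSeg_mul_posSwap (σ := σ) (i := 0) (j := hitSize 𝒜 σ 1 - 1) (by omega)]
  exact initSeg_mul_posSwap_ne (by omega) (by omega) (by omega)

theorem hitSizes_surgery (hY : ¬ ContainsYk k 𝒜) (hY' : ¬ ContainsYk' k 𝒜) (h0 : ∅ ∉ 𝒜)
    (h1 : (univ : Finset (Fin n)) ∉ 𝒜) :
    hitSizes 𝒜 (surgery k 𝒜 σ) =
      {m ∈ hitSizes 𝒜 σ | hitSize 𝒜 σ 1 ≤ m ∧ m ≤ hitSize 𝒜 σ (k - 1)} := by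
  set π := surgery k 𝒜 σ
  have hk1 := hitSize_le (σ := σ) (𝒜 := 𝒜) (i := k - 1) (by omega)
  have h1k := hitSize_le_hitSize (σ := σ) (𝒜 := 𝒜) (i := 1) (j := k - 1) (by omega) (by omega)
  ext m
  simp only [mem_filter, mem_hitSizes]
  constructor
  · rintro ⟨hmn, hm𝒜⟩
    by_cases hm1 : hitSize 𝒜 σ 1 ≤ m
    · by_cases hm2 : m ≤ hitSize 𝒜 σ (k - 1)
      · rw [initSeg_surgery hk hσ hm1 hm2] at hm𝒜
        exact ⟨⟨hmn, hm𝒜⟩, hm1, hm2⟩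
      · have hsub : σ.initSeg (hitSize 𝒜 σ (k - 1)) ⊂ π.initSeg m := by
          rw [← initSeg_surgery hk hσ h1k le_rfl]
          exact initSeg_strictMonoOn hk1 hmn (by omega)
        have heq := eq_initSeg_hitSize_self hσ hY hm𝒜 hsub
        have : m = hitSize 𝒜 σ k := by
          rw [← card_initSeg (σ := π) hmn, heq, card_initSeg_hitSize (by omega)]
        exact absurd (this ▸ heq) (initSeg_surgery_hitSize_self_ne hk hσ h1)
    · have hsub : π.initSeg m ⊂ σ.initSeg (hitSize 𝒜 σ 1) := by
        rw [← initSeg_surgery hk hσ le_rfl h1k]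
        exact initSeg_strictMonoOn hmn (hitSize_le (by omega)) (by omega)
      have heq := eq_initSeg_hitSize_zero hσ hY' hm𝒜 hsub
      have : m = hitSize 𝒜 σ 0 := by
        rw [← card_initSeg (σ := π) hmn, heq, card_initSeg_hitSize (by omega)]
      exact absurd (this ▸ heq) (initSeg_surgery_hitSize_zero_ne hk hσ h0)
  · rintro ⟨⟨hmn, hm𝒜⟩, hm1, hm2⟩
    exact ⟨hmn, initSeg_surgery hk hσ hm1 hm2 ▸ hm𝒜⟩

variable (hY : ¬ ContainsYk k 𝒜) (hY' : ¬ ContainsYk' k 𝒜) (h0 : ∅ ∉ 𝒜)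
  (h1 : (univ : Finset (Fin n)) ∉ 𝒜)
include hY hY' h0 h1

theorem card_hitSizes_surgery_lt : #(hitSizes 𝒜 (surgery k 𝒜 σ)) < k := by
  have h01 := hitSize_lt_hitSize (σ := σ) (𝒜 := 𝒜) (i := 0) (j := 1) (by omega) (by omega)
  have hk1k := hitSize_lt_hitSize (σ := σ) (𝒜 := 𝒜) (i := k - 1) (j := k) (by omega) (by omega)
  have h0k := hitSize_lt_hitSize (σ := σ) (𝒜 := 𝒜) (i := 0) (j := k) (by omega) (by omega)
  have hout : {hitSize 𝒜 σ 0, hitSize 𝒜 σ k} ⊆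
      {m ∈ hitSizes 𝒜 σ | ¬(hitSize 𝒜 σ 1 ≤ m ∧ m ≤ hitSize 𝒜 σ (k - 1))} := by
    simp only [insert_subset_iff, singleton_subset_iff, mem_filter]
    exact ⟨⟨hitSize_mem (by omega), by omega⟩, ⟨hitSize_mem (by omega), by omega⟩⟩
  have := card_le_card hout
  rw [card_pair (by omega)] at this
  have := card_filter_add_card_filter_not (s := hitSizes 𝒜 σ)
    (fun m => hitSize 𝒜 σ 1 ≤ m ∧ m ≤ hitSize 𝒜 σ (k - 1))
  rw [hitSizes_surgery hk hσ hY hY' h0 h1]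
  omega

omit hσ in
theorem surgery_injOn : Set.InjOn (surgery k 𝒜) {σ | #(hitSizes 𝒜 σ) = k + 1} := by
  have bounds : ∀ σ τ : Perm (Fin n), #(hitSizes 𝒜 σ) = k + 1 → #(hitSizes 𝒜 τ) = k + 1 →
      surgery k 𝒜 σ = surgery k 𝒜 τ →
      hitSize 𝒜 σ 1 ≤ hitSize 𝒜 τ 1 ∧ hitSize 𝒜 τ (k - 1) ≤ hitSize 𝒜 σ (k - 1) := by
    intro σ τ hσ hτ h
    have hmem : ∀ j, 1 ≤ j → j ≤ k - 1 → hitSize 𝒜 τ j ∈ hitSizes 𝒜 (surgery k 𝒜 σ) := by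
      intro j hj1 hj2
      rw [h, hitSizes_surgery hk hτ hY hY' h0 h1, mem_filter]
      exact ⟨hitSize_mem (by omega), hitSize_le_hitSize hj1 (by omega),
        hitSize_le_hitSize hj2 (by omega)⟩
    rw [hitSizes_surgery hk hσ hY hY' h0 h1] at hmem
    exact ⟨(mem_filter.1 (hmem 1 le_rfl (by omega))).2.1,
      (mem_filter.1 (hmem (k - 1) (by omega) le_rfl)).2.2⟩
  intro σ hσ τ hτ h
  obtain ⟨hστ1, hτσ2⟩ := bounds σ τ hσ hτ h
  obtain ⟨hτσ1, hστ2⟩ := bounds τ σ hτ hσ h.symm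
  rw [surgery, surgery, le_antisymm hστ1 hτσ1, le_antisymm hστ2 hτσ2] at h
  exact mul_right_cancel (mul_right_cancel h)

end Surgery

theorem lym_Yk_Yk'_general (n k : ℕ) (hk : 2 ≤ k) (𝒜 : Finset (Finset (Fin n)))
    (hY : ¬ ContainsYk k 𝒜) (hY' : ¬ ContainsYk' k 𝒜)
    (h0 : ∅ ∉ 𝒜) (h1 : (Finset.univ : Finset (Fin n)) ∉ 𝒜) :
    ∑ A ∈ 𝒜, ((n.choose A.card : ℚ))⁻¹ ≤ (k : ℚ) := by
  have hsum : ∑ A ∈ 𝒜, (#A)! * (n - #A)! ≤ k * n ! := by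
    rw [← sum_card_hitSizes]
    refine (sum_le_mul_card_of_injOn (card_hitSizes_le hY)
      (fun σ hσ => card_hitSizes_surgery_lt hk hσ hY hY' h0 h1)
      (surgery_injOn hk hY hY' h0 h1)).trans_eq ?_
    rw [Fintype.card_perm, Fintype.card_fin]
  calc ∑ A ∈ 𝒜, ((n.choose A.card : ℚ))⁻¹
      = (∑ A ∈ 𝒜, ((#A)! * (n - #A)! : ℚ)) / n ! := by
        rw [sum_div]
        refine sum_congr rfl fun A _ => ?_
        rw [Nat.cast_choose ℚ (by simpa using card_le_univ A), inv_div]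
    _ ≤ (k * n ! : ℚ) / n ! := by gcongr; exact_mod_cast hsum
    _ = k := by field_simp

/-- LYM-type inequality for families containing neither `Y_k` nor `Y_k'`
and avoiding `∅` and `[n]`. -/
theorem lym_Yk_Yk' (n k : ℕ) (hk : 2 ≤ k) (hn : k + 1 ≤ n) (𝒜 : Finset (Finset (Fin n)))
    (hY : ¬ ContainsYk k 𝒜) (hY' : ¬ ContainsYk' k 𝒜)
    (h0 : ∅ ∉ 𝒜) (h1 : (Finset.univ : Finset (Fin n)) ∉ 𝒜) :
    ∑ A ∈ 𝒜, ((n.choose A.card : ℚ))⁻¹ ≤ (k : ℚ) :=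
  lym_Yk_Yk'_general n k hk 𝒜 hY hY' h0 h1
end

section
/- Let A ⊆ 2^[n] be a family that contains neither Y nor Y' as an induced subposet, with ∅ ∉ A and [n] ∉ A. Then the sum over all A ∈ A of 1/C(n,|A|) is at most 2. -/
/-!
Double count the maximal chains of `2^[n]`, encoded by permutations `σ` of `Fin n`: a set `A`
lies on `|A|! (n - |A|)!` of the `n!` chains, so the claim is
`∑_{A ∈ 𝒜} #(chains through A) ≤ 2 n!`.
Every chain meeting `𝒜` has one lowest and one highest member of `𝒜`, so it suffices that the
number of chains through each `A ∈ 𝒜` is at most the number on which `A` is lowest plus the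
number on which it is highest.
This is clear if `A` is minimal or maximal in `𝒜`. Otherwise, since `𝒜` has no induced `Y'`,
the members of `𝒜` below `A` form a chain; as its least element is nonempty and its largest is a
proper subset of `A`, some `p ∈ A` lies in all of them and some `q ∈ A` in none. Composing with
the transposition `(p q)` sends the chains through `A` that meet a member below `A` injectively
to chains on which `A` is lowest, so `A` is lowest on at least half the chains through it.
Dually, as `𝒜` has no induced `Y`, `A` is highest on at least half of them.
-/

open Finset

/-- The family `𝒜` contains `Y` as an induced subposet: four pairwise distinct sets
`w, x, y, z ∈ 𝒜` with `w ⊆ x`, `x ⊆ y`, `x ⊆ z`, `y ⊄ z` and `z ⊄ y`. -/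
def ContainsInducedY {n : ℕ} (𝒜 : Finset (Finset (Fin n))) : Prop :=
  ∃ w x y z : Finset (Fin n),
    w ∈ 𝒜 ∧ x ∈ 𝒜 ∧ y ∈ 𝒜 ∧ z ∈ 𝒜 ∧
    w ≠ x ∧ w ≠ y ∧ w ≠ z ∧ x ≠ y ∧ x ≠ z ∧ y ≠ z ∧
    w ⊆ x ∧ x ⊆ y ∧ x ⊆ z ∧ ¬ y ⊂ z ∧ ¬ z ⊂ y

/-- The family `𝒜` contains `Y'` as an induced subposet: four pairwise distinct sets
`w, x, y, z ∈ 𝒜` with `x ⊆ w`, `y ⊆ x`, `z ⊆ x`, `y ⊄ z` and `z ⊄ y`. -/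
def ContainsInducedY' {n : ℕ} (𝒜 : Finset (Finset (Fin n))) : Prop :=
  ∃ w x y z : Finset (Fin n),
    w ∈ 𝒜 ∧ x ∈ 𝒜 ∧ y ∈ 𝒜 ∧ z ∈ 𝒜 ∧
    w ≠ x ∧ w ≠ y ∧ w ≠ z ∧ x ≠ y ∧ x ≠ z ∧ y ≠ z ∧
    x ⊆ w ∧ y ⊆ x ∧ z ⊆ x ∧ ¬ y ⊂ z ∧ ¬ z ⊂ y

open Equiv
open scoped Pointwise Nat

theorem IsChain.finset_sup'_mem {α : Type*} [SemilatticeSup α] {s : Finset α}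
    (hs : IsChain (· ≤ ·) (s : Set α)) (hne : s.Nonempty) : s.sup' hne id ∈ s :=
  sup'_mem (s : Set α) (fun _ ha _ hb => (hs.total ha hb).elim
    (fun h => (sup_eq_right.2 h).symm ▸ hb) (fun h => (sup_eq_left.2 h).symm ▸ ha))
    s hne id fun _ => id

theorem IsChain.finset_inf'_mem {α : Type*} [SemilatticeInf α] {s : Finset α}
    (hs : IsChain (· ≤ ·) (s : Set α)) (hne : s.Nonempty) : s.inf' hne id ∈ s :=
  inf'_mem (s : Set α) (fun _ ha _ hb => (hs.total ha hb).elim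
    (fun h => (inf_eq_left.2 h).symm ▸ ha) (fun h => (inf_eq_right.2 h).symm ▸ hb))
    s hne id fun _ => id

variable {n : ℕ}

/-- The permutation `σ` encodes the maximal chain `∅ ⊂ {σ 0} ⊂ {σ 0, σ 1} ⊂ ⋯`, whose member
of size `k` is `permSegment σ k`. -/
def permSegment (σ : Perm (Fin n)) (k : ℕ) : Finset (Fin n) := {v | (σ⁻¹ v : ℕ) < k}

def PassesThrough (σ : Perm (Fin n)) (A : Finset (Fin n)) : Prop := permSegment σ #A = A

instance (σ : Perm (Fin n)) (A : Finset (Fin n)) : Decidable (PassesThrough σ A) :=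
  inferInstanceAs (Decidable (_ = _))

section PassesThrough

variable {σ ρ : Perm (Fin n)} {A B : Finset (Fin n)}

theorem passesThrough_iff : PassesThrough σ A ↔ ∀ v, v ∈ A ↔ (σ⁻¹ v : ℕ) < #A := by
  simp only [PassesThrough, permSegment, Finset.ext_iff, mem_filter, mem_univ, true_and]
  exact forall_congr' fun _ => Iff.comm

theorem PassesThrough.subset_of_card_le (hA : PassesThrough σ A) (hB : PassesThrough σ B)
    (h : #A ≤ #B) : A ⊆ B := fun v hv =>
  (passesThrough_iff.1 hB v).2 (((passesThrough_iff.1 hA v).1 hv).trans_le h)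

theorem PassesThrough.subset_or_subset (hA : PassesThrough σ A) (hB : PassesThrough σ B) :
    A ⊆ B ∨ B ⊆ A :=
  (le_total #A #B).imp (hA.subset_of_card_le hB) (hB.subset_of_card_le hA)

theorem PassesThrough.ssubset_or_ssubset (hA : PassesThrough σ A) (hB : PassesThrough σ B)
    (hAB : A ≠ B) : A ⊂ B ∨ B ⊂ A :=
  (hA.subset_or_subset hB).imp (fun h => Finset.ssubset_iff_subset_ne.2 ⟨h, hAB⟩)
    (fun h => Finset.ssubset_iff_subset_ne.2 ⟨h, hAB.symm⟩)

theorem passesThrough_mul_iff : PassesThrough (ρ * σ) A ↔ PassesThrough σ (ρ⁻¹ • A) := by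
  rw [passesThrough_iff, passesThrough_iff, card_smul_finset, ← ρ.forall_congr_right]
  simp only [mul_inv_rev, Perm.mul_apply, Perm.coe_inv, symm_apply_apply,
    mem_inv_smul_finset_iff, Perm.smul_def]

theorem card_permSegment (σ : Perm (Fin n)) {k : ℕ} (hk : k ≤ n) : #(permSegment σ k) = k :=
  calc #(permSegment σ k) = #({i : Fin n | (i : ℕ) < k}) :=
        card_equiv σ⁻¹ fun v => by simp [permSegment]
    _ = k := by rw [Fin.card_filter_val_lt, min_eq_right hk]

end PassesThrough

def chainsThrough (A : Finset (Fin n)) : Finset (Perm (Fin n)) := {σ | PassesThrough σ A}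

theorem mem_chainsThrough {σ : Perm (Fin n)} {A : Finset (Fin n)} :
    σ ∈ chainsThrough A ↔ PassesThrough σ A := by
  simp [chainsThrough]

theorem card_chainsThrough_congr {A B : Finset (Fin n)} (h : #A = #B) :
    #(chainsThrough A) = #(chainsThrough B) := by
  obtain ⟨ρ, hρ⟩ := (Set.powersetCard.isPretransitive (α := Fin n) (n := #A)).exists_smul_eq
    ⟨A, rfl⟩ ⟨B, h.symm⟩
  obtain rfl : ρ • A = B := congrArg Subtype.val hρ
  exact card_equiv (Equiv.mulLeft ρ) fun σ => by
    simp [mem_chainsThrough, passesThrough_mul_iff]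

theorem card_chainsThrough_mul_choose (A : Finset (Fin n)) :
    #(chainsThrough A) * n.choose #A = n ! := by
  have hA : #A ≤ n := by simpa using card_le_univ A
  have hfiber : ∀ B ∈ powersetCard #A univ,
      #{σ : Perm (Fin n) | permSegment σ #A = B} = #(chainsThrough A) := by
    intro B hB
    obtain ⟨-, hBA⟩ := mem_powersetCard.1 hB
    rw [← card_chainsThrough_congr hBA, ← hBA]
    rfl
  calc #(chainsThrough A) * n.choose #A
      = ∑ B ∈ powersetCard #A univ, #{σ : Perm (Fin n) | permSegment σ #A = B} := by
        rw [sum_const_nat hfiber, card_powersetCard, card_univ, Fintype.card_fin, mul_comm]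
    _ = #(univ : Finset (Perm (Fin n))) :=
        (card_eq_sum_card_fiberwise fun σ _ =>
          mem_powersetCard.2 ⟨subset_univ _, card_permSegment σ hA⟩).symm
    _ = n ! := by rw [card_univ, Fintype.card_perm, Fintype.card_fin]

theorem inv_choose_card_eq (A : Finset (Fin n)) :
    (n.choose #A : ℚ)⁻¹ = #(chainsThrough A) / n ! := by
  have hchoose : (n.choose #A : ℚ) ≠ 0 := by
    exact_mod_cast (Nat.choose_pos (by simpa using card_le_univ A)).ne'
  rw [eq_div_iff (by positivity), ← card_chainsThrough_mul_choose A]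
  push_cast
  field_simp

def chainsAvoiding (A : Finset (Fin n)) (S : Finset (Finset (Fin n))) : Finset (Perm (Fin n)) :=
  {σ ∈ chainsThrough A | ∀ a ∈ S, ¬ PassesThrough σ a}

theorem chainsAvoiding_empty (A : Finset (Fin n)) : chainsAvoiding A ∅ = chainsThrough A := by
  simp [chainsAvoiding]

theorem swap_smul_finset_eq_self {A : Finset (Fin n)} {p q : Fin n} (hpq : p ∈ A ↔ q ∈ A) :
    swap p q • A = A := by
  ext v
  rw [← swap_inv, mem_inv_smul_finset_iff, Perm.smul_def]
  rcases eq_or_ne v p with rfl | hvp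
  · rw [swap_apply_left]; exact hpq.symm
  rcases eq_or_ne v q with rfl | hvq
  · rw [swap_apply_right]; exact hpq
  rw [swap_apply_of_ne_of_ne hvp hvq]

theorem card_chainsThrough_le_two_mul_card_chainsAvoiding {A : Finset (Fin n)}
    {S : Finset (Finset (Fin n))} {p q : Fin n} (hpq : p ∈ A ↔ q ∈ A)
    (hS : ∀ a ∈ S, p ∈ a ∧ q ∉ a) : #(chainsThrough A) ≤ 2 * #(chainsAvoiding A S) := by
  have hmeet : #{σ ∈ chainsThrough A | ¬ ∀ a ∈ S, ¬ PassesThrough σ a} ≤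
      #(chainsAvoiding A S) := by
    refine card_le_card_of_injOn (swap p q * ·) (fun σ hσ => ?_)
      (fun σ _ τ _ h => mul_left_cancel h)
    simp only [coe_filter, mem_chainsThrough, not_forall, not_not] at hσ
    obtain ⟨hσA, a₀, ha₀, hσa₀⟩ := hσ
    refine mem_filter.2 ⟨mem_chainsThrough.2 ?_, fun a ha hσa => ?_⟩
    · rwa [passesThrough_mul_iff, swap_inv, swap_smul_finset_eq_self hpq]
    rw [passesThrough_mul_iff] at hσa
    have hp : p ∉ (swap p q)⁻¹ • a := by
      rw [mem_inv_smul_finset_iff, Perm.smul_def, swap_apply_left]; exact (hS a ha).2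
    have hq : q ∈ (swap p q)⁻¹ • a := by
      rw [mem_inv_smul_finset_iff, Perm.smul_def, swap_apply_right]; exact (hS a ha).1
    rcases hσa₀.subset_or_subset hσa with h | h
    · exact hp (h (hS a₀ ha₀).1)
    · exact (hS a₀ ha₀).2 (h hq)
  have hsplit := card_filter_add_card_filter_not (s := chainsThrough A)
    (fun σ => ∀ a ∈ S, ¬ PassesThrough σ a)
  rw [← chainsAvoiding] at hsplit
  omega

section Family

variable (𝒜 : Finset (Finset (Fin n)))

def chainsWithBottom (A : Finset (Fin n)) : Finset (Perm (Fin n)) :=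
  chainsAvoiding A {a ∈ 𝒜 | a ⊂ A}

def chainsWithTop (A : Finset (Fin n)) : Finset (Perm (Fin n)) :=
  chainsAvoiding A {a ∈ 𝒜 | A ⊂ a}

theorem pairwiseDisjoint_chainsWithBottom :
    (𝒜 : Set (Finset (Fin n))).PairwiseDisjoint (chainsWithBottom 𝒜) := by
  intro A hA B hB hAB
  refine disjoint_left.2 fun σ hσA hσB => ?_
  simp only [chainsWithBottom, chainsAvoiding, mem_filter, mem_chainsThrough] at hσA hσB
  rcases hσA.1.ssubset_or_ssubset hσB.1 hAB with h | h
  · exact hσB.2 A ⟨hA, h⟩ hσA.1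
  · exact hσA.2 B ⟨hB, h⟩ hσB.1

theorem pairwiseDisjoint_chainsWithTop :
    (𝒜 : Set (Finset (Fin n))).PairwiseDisjoint (chainsWithTop 𝒜) := by
  intro A hA B hB hAB
  refine disjoint_left.2 fun σ hσA hσB => ?_
  simp only [chainsWithTop, chainsAvoiding, mem_filter, mem_chainsThrough] at hσA hσB
  rcases hσA.1.ssubset_or_ssubset hσB.1 hAB with h | h
  · exact hσA.2 B ⟨hB, h⟩ hσB.1
  · exact hσB.2 A ⟨hA, h⟩ hσA.1

theorem sum_card_chainsWithBottom_le : ∑ A ∈ 𝒜, #(chainsWithBottom 𝒜 A) ≤ n ! := by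
  rw [← card_biUnion (pairwiseDisjoint_chainsWithBottom 𝒜)]
  simpa only [card_univ, Fintype.card_perm, Fintype.card_fin] using
    card_le_univ (𝒜.biUnion (chainsWithBottom 𝒜))

theorem sum_card_chainsWithTop_le : ∑ A ∈ 𝒜, #(chainsWithTop 𝒜 A) ≤ n ! := by
  rw [← card_biUnion (pairwiseDisjoint_chainsWithTop 𝒜)]
  simpa only [card_univ, Fintype.card_perm, Fintype.card_fin] using
    card_le_univ (𝒜.biUnion (chainsWithTop 𝒜))

variable {𝒜} {x : Finset (Fin n)}

theorem isChain_filter_ssubset_of_not_containsInducedY' (hY' : ¬ ContainsInducedY' 𝒜)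
    (hx : x ∈ 𝒜) (habove : {a ∈ 𝒜 | x ⊂ a}.Nonempty) :
    IsChain (· ≤ ·) (↑({a ∈ 𝒜 | a ⊂ x} : Finset (Finset (Fin n))) : Set (Finset (Fin n))) := by
  obtain ⟨w, hw⟩ := habove
  rw [mem_filter] at hw
  intro a ha b hb hab
  rw [mem_coe, mem_filter] at ha hb
  by_contra hcomp
  rw [not_or] at hcomp
  exact hY' ⟨w, x, a, b, hw.1, hx, ha.1, hb.1, hw.2.ne', (ha.2.trans hw.2).ne',
    (hb.2.trans hw.2).ne', ha.2.ne', hb.2.ne', hab, hw.2.subset, ha.2.subset, hb.2.subset,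
    fun h => hcomp.1 h.subset, fun h => hcomp.2 h.subset⟩

theorem isChain_filter_ssuperset_of_not_containsInducedY (hY : ¬ ContainsInducedY 𝒜)
    (hx : x ∈ 𝒜) (hbelow : {a ∈ 𝒜 | a ⊂ x}.Nonempty) :
    IsChain (· ≤ ·) (↑({a ∈ 𝒜 | x ⊂ a} : Finset (Finset (Fin n))) : Set (Finset (Fin n))) := by
  obtain ⟨w, hw⟩ := hbelow
  rw [mem_filter] at hw
  intro a ha b hb hab
  rw [mem_coe, mem_filter] at ha hb
  by_contra hcomp
  rw [not_or] at hcomp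
  exact hY ⟨w, x, a, b, hw.1, hx, ha.1, hb.1, hw.2.ne, (hw.2.trans ha.2).ne,
    (hw.2.trans hb.2).ne, ha.2.ne, hb.2.ne, hab, hw.2.subset, ha.2.subset, hb.2.subset,
    fun h => hcomp.1 h.subset, fun h => hcomp.2 h.subset⟩

theorem card_chainsThrough_le_two_mul_card_chainsWithBottom (hY' : ¬ ContainsInducedY' 𝒜)
    (h0 : ∅ ∉ 𝒜) (hx : x ∈ 𝒜) (hbelow : {a ∈ 𝒜 | a ⊂ x}.Nonempty)
    (habove : {a ∈ 𝒜 | x ⊂ a}.Nonempty) :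
    #(chainsThrough x) ≤ 2 * #(chainsWithBottom 𝒜 x) := by
  have hchain := isChain_filter_ssubset_of_not_containsInducedY' hY' hx habove
  have hmin := mem_filter.1 (hchain.finset_inf'_mem hbelow)
  have hmax := mem_filter.1 (hchain.finset_sup'_mem hbelow)
  obtain ⟨p, hp⟩ := nonempty_iff_ne_empty.2 fun h => h0 (h ▸ hmin.1)
  obtain ⟨q, hqx, hq⟩ := exists_of_ssubset hmax.2
  refine card_chainsThrough_le_two_mul_card_chainsAvoiding
    (iff_of_true (hmin.2.subset hp) hqx) fun a ha => ⟨inf'_le id ha hp, fun hqa => hq ?_⟩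
  exact le_sup' id ha hqa

theorem card_chainsThrough_le_two_mul_card_chainsWithTop (hY : ¬ ContainsInducedY 𝒜)
    (h1 : (univ : Finset (Fin n)) ∉ 𝒜) (hx : x ∈ 𝒜) (hbelow : {a ∈ 𝒜 | a ⊂ x}.Nonempty)
    (habove : {a ∈ 𝒜 | x ⊂ a}.Nonempty) :
    #(chainsThrough x) ≤ 2 * #(chainsWithTop 𝒜 x) := by
  have hchain := isChain_filter_ssuperset_of_not_containsInducedY hY hx hbelow
  have hmin := mem_filter.1 (hchain.finset_inf'_mem habove)
  have hmax := mem_filter.1 (hchain.finset_sup'_mem habove)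
  obtain ⟨p, hp, hpx⟩ := exists_of_ssubset hmin.2
  obtain ⟨q, hq⟩ : ∃ q, q ∉ {a ∈ 𝒜 | x ⊂ a}.sup' habove id := by
    by_contra! h
    exact h1 (eq_univ_iff_forall.2 h ▸ hmax.1)
  refine card_chainsThrough_le_two_mul_card_chainsAvoiding
    (iff_of_false hpx fun hqx => hq (hmax.2.subset hqx))
    fun a ha => ⟨inf'_le id ha hp, fun hqa => hq (le_sup' id ha hqa)⟩

theorem card_chainsThrough_le_card_chainsWithBottom_add_card_chainsWithTop
    (hY : ¬ ContainsInducedY 𝒜) (hY' : ¬ ContainsInducedY' 𝒜) (h0 : ∅ ∉ 𝒜)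
    (h1 : (univ : Finset (Fin n)) ∉ 𝒜) (hx : x ∈ 𝒜) :
    #(chainsThrough x) ≤ #(chainsWithBottom 𝒜 x) + #(chainsWithTop 𝒜 x) := by
  rcases eq_empty_or_nonempty {a ∈ 𝒜 | a ⊂ x} with hbelow | hbelow
  · rw [chainsWithBottom, hbelow, chainsAvoiding_empty]
    exact le_self_add
  rcases eq_empty_or_nonempty {a ∈ 𝒜 | x ⊂ a} with habove | habove
  · rw [chainsWithTop, habove, chainsAvoiding_empty]
    exact le_add_self
  have := card_chainsThrough_le_two_mul_card_chainsWithBottom hY' h0 hx hbelow habove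
  have := card_chainsThrough_le_two_mul_card_chainsWithTop hY h1 hx hbelow habove
  omega

end Family

/-- LYM-type inequality for families containing neither `Y` nor `Y'` as an induced subposet
and avoiding `∅` and `[n]`. -/
theorem lym_induced_Y_Y' (n : ℕ) (𝒜 : Finset (Finset (Fin n)))
    (hY : ¬ ContainsInducedY 𝒜) (hY' : ¬ ContainsInducedY' 𝒜)
    (h0 : ∅ ∉ 𝒜) (h1 : (Finset.univ : Finset (Fin n)) ∉ 𝒜) :
    ∑ A ∈ 𝒜, ((n.choose A.card : ℚ))⁻¹ ≤ 2 := by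
  have hcount : ∑ A ∈ 𝒜, #(chainsThrough A) ≤ 2 * n ! :=
    calc ∑ A ∈ 𝒜, #(chainsThrough A)
        ≤ ∑ A ∈ 𝒜, (#(chainsWithBottom 𝒜 A) + #(chainsWithTop 𝒜 A)) :=
          sum_le_sum fun A hA =>
            card_chainsThrough_le_card_chainsWithBottom_add_card_chainsWithTop hY hY' h0 h1 hA
      _ = ∑ A ∈ 𝒜, #(chainsWithBottom 𝒜 A) + ∑ A ∈ 𝒜, #(chainsWithTop 𝒜 A) := sum_add_distrib
      _ ≤ n ! + n ! := add_le_add (sum_card_chainsWithBottom_le 𝒜) (sum_card_chainsWithTop_le 𝒜)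
      _ = 2 * n ! := (two_mul _).symm
  simp only [inv_choose_card_eq]
  rw [← sum_div, div_le_iff₀ (by positivity)]
  exact_mod_cast hcount
end

section
/- Let σ be a cyclic permutation of [n] and let A be a collection of intervals along σ that does not contain the skew-butterfly poset S as a weak subposet. Then |A| ≤ 2n. -/
open Finset

/-- The family `𝒜` contains the skew-butterfly poset `S` as a (weak) subposet:
five pairwise distinct sets `a, b, c, d, e ∈ 𝒜` with
`a ⊆ c`, `a ⊆ d`, `b ⊆ c`, `b ⊆ d` and `b ⊆ e ⊆ d`. -/
def ContainsSkewButterfly {n : ℕ} (𝒜 : Finset (Finset (Fin n))) : Prop :=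
  ∃ a b c d e : Finset (Fin n),
    a ∈ 𝒜 ∧ b ∈ 𝒜 ∧ c ∈ 𝒜 ∧ d ∈ 𝒜 ∧ e ∈ 𝒜 ∧
    a ≠ b ∧ a ≠ c ∧ a ≠ d ∧ a ≠ e ∧ b ≠ c ∧ b ≠ d ∧ b ≠ e ∧ c ≠ d ∧ c ≠ e ∧ d ≠ e ∧
    a ⊆ c ∧ a ⊆ d ∧ b ⊆ c ∧ b ⊆ d ∧ b ⊆ e ∧ e ⊆ d

/-- The interval `{x i, x (i+1), …, x (i+t)}` along the cyclic permutation `σ`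
(indices taken modulo `n`). -/
def cycInterval (n : ℕ) (σ : ZMod n ≃ Fin n) (i : ZMod n) (t : ℕ) : Finset (Fin n) :=
  (Finset.range (t + 1)).image fun s : ℕ => σ (i + (s : ZMod n))

/-- `I` is an interval along the cyclic permutation `σ`; neither `∅` nor `[n]`
is an interval. -/
def IsCycInterval (n : ℕ) (σ : ZMod n ≃ Fin n) (I : Finset (Fin n)) : Prop :=
  ∃ (i : ZMod n) (t : ℕ), t ≤ n - 2 ∧ I = cycInterval n σ i t

/-!
Code each interval by its start and its last point. Deleting an interval whose start, or whose
last point, is shared by no other interval of the family loses one of at most `n` starts or one of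
at most `n` last points, so it suffices to treat a family in which every interval shares its start
with another one and its last point with another one. In such a family no three intervals share
a start: for `I₁ ⊂ I₂ ⊂ I₃` starting at the same point, the other interval ending where `I₂` ends
either lies inside `I₂` or wraps around the cycle and contains it, and in each case the interval
ending where `I₃` (resp. `I₁`) ends, together with an interval starting where that partner of `I₂`
starts, completes a skew butterfly. Reading the cycle backwards, no three intervals share a last
point either, so such a family has twice as many members as starts, and as last points.
-/

section SkewButterfly
variable {α β : Type*}

/-- `ContainsSkewButterfly 𝒜` is `HasSkewButterfly (· ⊆ ·) 𝒜` by definition. -/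
def HasSkewButterfly (r : α → α → Prop) (s : Finset α) : Prop :=
  ∃ a b c d e : α,
    a ∈ s ∧ b ∈ s ∧ c ∈ s ∧ d ∈ s ∧ e ∈ s ∧
    a ≠ b ∧ a ≠ c ∧ a ≠ d ∧ a ≠ e ∧ b ≠ c ∧ b ≠ d ∧ b ≠ e ∧ c ≠ d ∧ c ≠ e ∧ d ≠ e ∧
    r a c ∧ r a d ∧ r b c ∧ r b d ∧ r b e ∧ r e d

theorem HasSkewButterfly.mono {r : α → α → Prop} {s t : Finset α} (hst : s ⊆ t) :
    HasSkewButterfly r s → HasSkewButterfly r t := by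
  rintro ⟨a, b, c, d, e, ha, hb, hc, hd, he, h⟩
  exact ⟨a, b, c, d, e, hst ha, hst hb, hst hc, hst hd, hst he, h⟩

theorem HasSkewButterfly.image [DecidableEq β] {r : α → α → Prop} {r' : β → β → Prop}
    {s : Finset α} {f : α → β} (hf : Set.InjOn f s)
    (hr : ∀ x ∈ s, ∀ y ∈ s, r x y → r' (f x) (f y)) :
    HasSkewButterfly r s → HasSkewButterfly r' (s.image f) := by
  rintro ⟨a, b, c, d, e, ha, hb, hc, hd, he, hab, hac, had, hae, hbc, hbd, hbe, hcd, hce, hde,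
    rac, rad, rbc, rbd, rbe, red⟩
  exact ⟨f a, f b, f c, f d, f e, mem_image_of_mem f ha, mem_image_of_mem f hb,
    mem_image_of_mem f hc, mem_image_of_mem f hd, mem_image_of_mem f he,
    hf.ne ha hb hab, hf.ne ha hc hac, hf.ne ha hd had, hf.ne ha he hae, hf.ne hb hc hbc,
    hf.ne hb hd hbd, hf.ne hb he hbe, hf.ne hc hd hcd, hf.ne hc he hce, hf.ne hd he hde,
    hr a ha c hc rac, hr a ha d hd rad, hr b hb c hc rbc, hr b hb d hd rbd, hr b hb e he rbe,
    hr e he d hd red⟩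

end SkewButterfly

section Peeling
variable {α β γ : Type*} [DecidableEq α] [DecidableEq β] [DecidableEq γ]

theorem card_image_erase_add_one {f : α → β} {s : Finset α} {x : α} (hx : x ∈ s)
    (hpriv : ∀ y ∈ s, y ≠ x → f y ≠ f x) : #((s.erase x).image f) + 1 = #(s.image f) := by
  have hnot : f x ∉ (s.erase x).image f := by
    rw [mem_image]
    rintro ⟨y, hy, hfy⟩
    exact hpriv y (mem_of_mem_erase hy) (ne_of_mem_erase hy) hfy
  rw [← card_insert_of_notMem hnot, ← image_insert, insert_erase hx]

theorem card_le_card_image_add_card_image (f : α → β) (g : α → γ) (s : Finset α)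
    (hcore : ∀ t ⊆ s, (∀ x ∈ t, ∃ y ∈ t, y ≠ x ∧ f y = f x) →
      (∀ x ∈ t, ∃ y ∈ t, y ≠ x ∧ g y = g x) →
      (∀ b, #{x ∈ t | f x = b} ≤ 2) ∧ ∀ c, #{x ∈ t | g x = c} ≤ 2) :
    #s ≤ #(s.image f) + #(s.image g) := by
  induction s using Finset.strongInduction with
  | H s ih =>
  by_cases hpriv : ∃ x ∈ s, (∀ y ∈ s, y ≠ x → f y ≠ f x) ∨ ∀ y ∈ s, y ≠ x → g y ≠ g x
  · obtain ⟨x, hx, hfx | hgx⟩ := hpriv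
    all_goals
      have ih' := ih (s.erase x) (erase_ssubset hx)
        fun t ht => hcore t (ht.trans (erase_subset x s))
      have hcard := card_erase_add_one hx
    · have hf := card_image_erase_add_one hx hfx
      have hg := card_le_card (image_subset_image (f := g) (erase_subset x s))
      omega
    · have hg := card_image_erase_add_one hx hgx
      have hf := card_le_card (image_subset_image (f := f) (erase_subset x s))
      omega
  · push Not at hpriv
    obtain ⟨hf, hg⟩ := hcore s subset_rfl (fun x hx => (hpriv x hx).1) fun x hx => (hpriv x hx).2
    have := card_le_mul_card_image s 2 fun b _ => hf b
    have := card_le_mul_card_image s 2 fun c _ => hg c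
    omega

end Peeling

/-- For starts `p.1, q.1 < n`: the arc `{p.1, p.1 + 1, …, p.1 + p.2}` of `ℤ/n` lies in the arc
of `q`. -/
def ArcSubset (n : ℕ) (p q : ℕ × ℕ) : Prop :=
  (q.1 ≤ p.1 ∧ p.1 + p.2 ≤ q.1 + q.2) ∨ (p.1 < q.1 ∧ p.1 + p.2 + n ≤ q.1 + q.2)

structure IsArcCore (n : ℕ) (C : Finset (ℕ × ℕ)) : Prop where
  bound : ∀ p ∈ C, p.1 < n ∧ p.2 ≤ n - 2
  free : ¬ HasSkewButterfly (ArcSubset n) C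
  start_partner : ∀ p ∈ C, ∃ q ∈ C, q ≠ p ∧ q.1 = p.1
  end_partner : ∀ p ∈ C, ∃ q ∈ C, q ≠ p ∧ q.1 + q.2 ≡ p.1 + p.2 [MOD n]

theorem Nat.ModEq.eq_or_eq_add_of_lt {n a b : ℕ} (h : a ≡ b [MOD n]) (ha : a < 2 * n)
    (hb : b < n) : a = b ∨ a = b + n := by
  unfold Nat.ModEq at h
  rw [Nat.mod_eq_of_lt hb] at h
  rcases lt_or_ge a n with han | han
  · exact Or.inl (by rwa [Nat.mod_eq_of_lt han] at h)
  · rw [Nat.mod_eq_sub_mod han, Nat.mod_eq_of_lt (by omega)] at h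
    omega

namespace IsArcCore
variable {n : ℕ} {C : Finset (ℕ × ℕ)}

theorem exists_end_partner_of_start_zero (hC : IsArcCore n C) {t : ℕ} (ht : (0, t) ∈ C) :
    ∃ o u, (o, u) ∈ C ∧ u ≤ n - 2 ∧ ((1 ≤ o ∧ o + u = t) ∨ o + u = t + n) := by
  obtain ⟨⟨o, u⟩, hq, hne, hmod⟩ := hC.end_partner _ ht
  obtain ⟨ho, hu⟩ := hC.bound _ hq
  have ht' := (hC.bound _ ht).2
  have hend := hmod.eq_or_eq_add_of_lt (by simp only; omega) (by simp only; omega)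
  simp only [ne_eq, Prod.mk.injEq] at hend hne
  exact ⟨o, u, hq, hu, by omega⟩

theorem exists_start_partner (hC : IsArcCore n C) {o u : ℕ} (hp : (o, u) ∈ C) :
    ∃ x, (o, x) ∈ C ∧ x ≠ u := by
  obtain ⟨⟨o', x⟩, hq, hne, rfl⟩ := hC.start_partner _ hp
  exact ⟨x, hq, fun h => hne (by rw [h])⟩

variable {t₁ t₂ t₃ : ℕ}

theorem false_of_end_partner_inside (hC : IsArcCore n C) (h₁ : (0, t₁) ∈ C) (h₂ : (0, t₂) ∈ C)
    (h₃ : (0, t₃) ∈ C) (h₁₂ : t₁ < t₂) (h₂₃ : t₂ < t₃) {b u : ℕ} (hβ : (b, u) ∈ C)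
    (hb : 1 ≤ b) (hbu : b + u = t₂) : False := by
  obtain ⟨c, w, hγ, hw, hcw⟩ := hC.exists_end_partner_of_start_zero h₃
  rcases hcw with ⟨hc₁, hcw⟩ | hcw
  · rcases le_or_gt c b with hcb | hbc
    · exact hC.free ⟨_, _, _, _, _, h₁, hβ, h₂, h₃, hγ,
        by simp only [ArcSubset, ne_eq, Prod.mk.injEq]; omega⟩
    obtain ⟨x, hδ, hxu⟩ := hC.exists_start_partner hβ
    rcases lt_or_gt_of_ne hxu with hxu | hux
    · exact hC.free ⟨_, _, _, _, _, h₁, hδ, h₂, h₃, hβ,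
        by simp only [ArcSubset, ne_eq, Prod.mk.injEq]; omega⟩
    rcases le_or_gt (b + x) t₃ with hδ₃ | hδ₃
    · exact hC.free ⟨_, _, _, _, _, h₁, hβ, h₂, h₃, hδ,
        by simp only [ArcSubset, ne_eq, Prod.mk.injEq]; omega⟩
    · exact hC.free ⟨_, _, _, _, _, hγ, hβ, hδ, h₃, h₂,
        by simp only [ArcSubset, ne_eq, Prod.mk.injEq]; omega⟩
  · exact hC.free ⟨_, _, _, _, _, hβ, h₁, h₃, hγ, h₂,
      by simp only [ArcSubset, ne_eq, Prod.mk.injEq]; omega⟩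

theorem false_of_end_partner_around (hC : IsArcCore n C) (h₁ : (0, t₁) ∈ C) (h₂ : (0, t₂) ∈ C)
    (h₃ : (0, t₃) ∈ C) (h₁₂ : t₁ < t₂) (h₂₃ : t₂ < t₃) {b u : ℕ} (hβ : (b, u) ∈ C)
    (hu : u ≤ n - 2) (hbu : b + u = t₂ + n) : False := by
  obtain ⟨a, y, hα, hy, hay⟩ := hC.exists_end_partner_of_start_zero h₁
  rcases hay with ⟨ha₁, hay⟩ | hay
  · exact hC.free ⟨_, _, _, _, _, hα, h₁, hβ, h₃, h₂,
      by simp only [ArcSubset, ne_eq, Prod.mk.injEq]; omega⟩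
  rcases le_or_gt b a with hba | hab
  · exact hC.free ⟨_, _, _, _, _, h₂, h₁, h₃, hβ, hα,
      by simp only [ArcSubset, ne_eq, Prod.mk.injEq]; omega⟩
  obtain ⟨x, hδ, hxu⟩ := hC.exists_start_partner hβ
  rcases lt_or_gt_of_ne hxu with hxu | hux
  · rcases le_or_gt (t₁ + n) (b + x) with h₁δ | h₁δ
    · exact hC.free ⟨_, _, _, _, _, h₂, h₁, h₃, hβ, hδ,
        by simp only [ArcSubset, ne_eq, Prod.mk.injEq]; omega⟩
    · exact hC.free ⟨_, _, _, _, _, hδ, h₁, hα, hβ, h₂,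
        by simp only [ArcSubset, ne_eq, Prod.mk.injEq]; omega⟩
  · exact hC.free ⟨_, _, _, _, _, h₁, h₂, h₃, hδ, hβ,
      by simp only [ArcSubset, ne_eq, Prod.mk.injEq]; omega⟩

theorem not_three_start_zero (hC : IsArcCore n C) (h₁ : (0, t₁) ∈ C) (h₂ : (0, t₂) ∈ C)
    (h₃ : (0, t₃) ∈ C) (h₁₂ : t₁ < t₂) (h₂₃ : t₂ < t₃) : False := by
  obtain ⟨b, u, hβ, hu, hbu⟩ := hC.exists_end_partner_of_start_zero h₂
  rcases hbu with ⟨hb₁, hbu⟩ | hbu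
  · exact hC.false_of_end_partner_inside h₁ h₂ h₃ h₁₂ h₂₃ hβ hb₁ hbu
  · exact hC.false_of_end_partner_around h₁ h₂ h₃ h₁₂ h₂₃ hβ hu hbu

theorem card_filter_start_zero_le_two (hC : IsArcCore n C) : #{p ∈ C | p.1 = 0} ≤ 2 := by
  by_contra! h
  set T := {p ∈ C | p.1 = 0}.image Prod.snd
  have hT : #T = #{p ∈ C | p.1 = 0} := card_image_of_injOn fun p hp q hq h =>
    Prod.ext ((mem_filter.1 hp).2.trans (mem_filter.1 hq).2.symm) h
  have hmem : ∀ i, (0, T.orderEmbOfFin rfl i) ∈ C := fun i => by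
    obtain ⟨p, hp, hpt⟩ := mem_image.1 (T.orderEmbOfFin_mem rfl i)
    obtain ⟨hpC, hp0⟩ := mem_filter.1 hp
    rwa [← hpt, ← hp0]
  exact hC.not_three_start_zero (hmem ⟨0, by omega⟩) (hmem ⟨1, by omega⟩) (hmem ⟨2, by omega⟩)
    ((T.orderEmbOfFin rfl).strictMono (by simp)) ((T.orderEmbOfFin rfl).strictMono (by simp))

end IsArcCore

theorem val_natCast_sub_add_le_of_arcSubset {n : ℕ} {p q : ℕ × ℕ} (hp : p.1 < n) (hq : q.1 < n)
    (h : ArcSubset n p q) : ((p.1 : ZMod n) - q.1).val + p.2 ≤ q.2 := by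
  rcases h with ⟨hqp, h⟩ | ⟨hpq, h⟩
  · rw [← Nat.cast_sub hqp, ZMod.val_cast_of_lt (by omega)]
    omega
  · have hcast : (p.1 : ZMod n) - q.1 = ((p.1 + n - q.1 : ℕ) : ZMod n) := by
      rw [Nat.cast_sub (by omega), Nat.cast_add, ZMod.natCast_self, add_zero]
    rw [hcast, ZMod.val_cast_of_lt (by omega)]
    omega

section CycInterval
variable {n : ℕ} [NeZero n] (σ : ZMod n ≃ Fin n)

theorem mem_cycInterval {i : ZMod n} {t : ℕ} (ht : t < n) {y : Fin n} :
    y ∈ cycInterval n σ i t ↔ (σ.symm y - i).val ≤ t := by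
  simp only [cycInterval, mem_image, mem_range, Nat.lt_succ_iff]
  constructor
  · rintro ⟨s, hs, rfl⟩
    rwa [Equiv.symm_apply_apply, add_sub_cancel_left, ZMod.val_cast_of_lt (by omega)]
  · intro hy
    refine ⟨(σ.symm y - i).val, hy, ?_⟩
    rw [ZMod.natCast_zmod_val, add_sub_cancel, Equiv.apply_symm_apply]

theorem cycInterval_subset_of_arcSubset (v : ZMod n) {p q : ℕ × ℕ} (hp : p.1 < n) (hq : q.1 < n)
    (hq₂ : q.2 < n) (h : ArcSubset n p q) :
    cycInterval n σ (v + p.1) p.2 ⊆ cycInterval n σ (v + q.1) q.2 := by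
  have hpq := val_natCast_sub_add_le_of_arcSubset hp hq h
  intro y hy
  rw [mem_cycInterval σ (by omega)] at hy
  rw [mem_cycInterval σ hq₂]
  calc (σ.symm y - (v + q.1)).val
      = ((σ.symm y - (v + p.1)) + ((p.1 : ZMod n) - q.1)).val := by ring_nf
    _ ≤ (σ.symm y - (v + p.1)).val + ((p.1 : ZMod n) - q.1).val := ZMod.val_add_le _ _
    _ ≤ q.2 := by omega

theorem val_natCast_sub_le_iff {t : ℕ} (ht : t < n) (b : ZMod n) :
    ((t : ZMod n) - b).val ≤ t ↔ b.val ≤ t := by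
  have key : ∀ b : ZMod n, b.val ≤ t → ((t : ZMod n) - b).val ≤ t := fun b hb => by
    rw [ZMod.val_sub (by rwa [ZMod.val_cast_of_lt ht]), ZMod.val_cast_of_lt ht]
    omega
  refine ⟨fun h => ?_, key b⟩
  simpa using key _ h

theorem cycInterval_reverse (i : ZMod n) {t : ℕ} (ht : t < n) :
    cycInterval n ((Equiv.neg (ZMod n)).trans σ) (-(i + t)) t = cycInterval n σ i t := by
  ext y
  rw [mem_cycInterval _ ht, mem_cycInterval _ ht, ← val_natCast_sub_le_iff ht (σ.symm y - i)]
  simp only [Equiv.symm_trans_apply, Equiv.neg_symm, Equiv.neg_apply]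
  ring_nf

end CycInterval

section ArcCode
variable {n : ℕ} (σ : ZMod n ≃ Fin n) (𝒜 : Finset (Finset (Fin n)))
  (c : Finset (Fin n) → ZMod n × ℕ)

def arcEnd (p : ZMod n × ℕ) : ZMod n := p.1 + p.2

def relArc (v : ZMod n) (p : ZMod n × ℕ) : ℕ × ℕ := ((p.1 - v).val, p.2)

theorem cycInterval_relArc [NeZero n] (v : ZMod n) (p : ZMod n × ℕ) :
    cycInterval n σ (v + (relArc v p).1) (relArc v p).2 = cycInterval n σ p.1 p.2 := by
  simp only [relArc, ZMod.natCast_zmod_val, add_sub_cancel]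

def IsArcCode : Prop :=
  ∀ I ∈ 𝒜, (c I).2 ≤ n - 2 ∧ cycInterval n σ (c I).1 (c I).2 = I

variable {σ 𝒜 c}

theorem exists_isArcCode (hInt : ∀ I ∈ 𝒜, IsCycInterval n σ I) : ∃ c, IsArcCode σ 𝒜 c := by
  choose! i t ht hI using hInt
  exact ⟨fun I => (i I, t I), fun I h => ⟨ht I h, (hI I h).symm⟩⟩

namespace IsArcCode

theorem mono {ℬ : Finset (Finset (Fin n))} (hc : IsArcCode σ 𝒜 c) (h : ℬ ⊆ 𝒜) :
    IsArcCode σ ℬ c :=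
  fun I hI => hc I (h hI)

theorem reverse [NeZero n] (hc : IsArcCode σ 𝒜 c) :
    IsArcCode ((Equiv.neg (ZMod n)).trans σ) 𝒜 fun I => (-arcEnd (c I), (c I).2) := by
  intro I hI
  obtain ⟨ht, hI⟩ := hc I hI
  have := NeZero.pos n
  exact ⟨ht, (cycInterval_reverse σ (c I).1 (by omega)).trans hI⟩

theorem cycInterval_relArc_eq [NeZero n] (hc : IsArcCode σ 𝒜 c) (v : ZMod n) {I : Finset (Fin n)}
    (hI : I ∈ 𝒜) : cycInterval n σ (v + (relArc v (c I)).1) (relArc v (c I)).2 = I := by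
  rw [cycInterval_relArc, (hc I hI).2]

theorem injOn_relArc [NeZero n] (hc : IsArcCode σ 𝒜 c) (v : ZMod n) :
    Set.InjOn (fun I => relArc v (c I)) 𝒜 := fun I hI J hJ h => by
  rw [← hc.cycInterval_relArc_eq v hI, ← hc.cycInterval_relArc_eq v hJ]
  simp only at h
  rw [h]

theorem isArcCore_image [NeZero n] (hc : IsArcCode σ 𝒜 c) (hS : ¬ ContainsSkewButterfly 𝒜)
    (hstart : ∀ I ∈ 𝒜, ∃ J ∈ 𝒜, J ≠ I ∧ (c J).1 = (c I).1)
    (hend : ∀ I ∈ 𝒜, ∃ J ∈ 𝒜, J ≠ I ∧ arcEnd (c J) = arcEnd (c I)) (v : ZMod n) :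
    IsArcCore n (𝒜.image fun I => relArc v (c I)) := by
  have hbound : ∀ I ∈ 𝒜, (relArc v (c I)).1 < n ∧ (relArc v (c I)).2 ≤ n - 2 := fun I hI =>
    ⟨ZMod.val_lt _, (hc I hI).1⟩
  refine ⟨by simpa using hbound, fun hB => hS ?_, ?_, ?_⟩
  · refine (hB.image (f := fun p => cycInterval n σ (v + p.1) p.2) ?_ ?_).mono ?_
    · simp only [Set.InjOn, coe_image, Set.forall_mem_image]
      intro I hI J hJ h
      simp only [hc.cycInterval_relArc_eq v hI, hc.cycInterval_relArc_eq v hJ] at h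
      rw [h]
    · simp only [mem_image, forall_exists_index, and_imp]
      rintro _ I hI rfl _ J hJ rfl
      exact cycInterval_subset_of_arcSubset σ v (hbound I hI).1 (hbound J hJ).1
        (by have := (hbound J hJ).2; have := NeZero.pos n; omega)
    · intro I
      simp only [mem_image]
      rintro ⟨_, ⟨J, hJ, rfl⟩, rfl⟩
      rwa [hc.cycInterval_relArc_eq v hJ]
  · simp only [mem_image, forall_exists_index, and_imp, forall_apply_eq_imp_iff₂]
    intro I hI
    obtain ⟨J, hJ, hJI, h⟩ := hstart I hI
    exact ⟨_, ⟨J, hJ, rfl⟩, (hc.injOn_relArc v).ne hJ hI hJI, by simp only [relArc, h]⟩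
  · simp only [mem_image, forall_exists_index, and_imp, forall_apply_eq_imp_iff₂]
    intro I hI
    obtain ⟨J, hJ, hJI, h⟩ := hend I hI
    refine ⟨_, ⟨J, hJ, rfl⟩, (hc.injOn_relArc v).ne hJ hI hJI, ?_⟩
    rw [← ZMod.natCast_eq_natCast_iff]
    simp only [relArc, arcEnd, Nat.cast_add, ZMod.natCast_zmod_val] at h ⊢
    linear_combination h

theorem card_filter_start_le_two [NeZero n] (hc : IsArcCode σ 𝒜 c)
    (hS : ¬ ContainsSkewButterfly 𝒜)
    (hstart : ∀ I ∈ 𝒜, ∃ J ∈ 𝒜, J ≠ I ∧ (c J).1 = (c I).1)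
    (hend : ∀ I ∈ 𝒜, ∃ J ∈ 𝒜, J ≠ I ∧ arcEnd (c J) = arcEnd (c I)) (v : ZMod n) :
    #{I ∈ 𝒜 | (c I).1 = v} ≤ 2 :=
  calc #{I ∈ 𝒜 | (c I).1 = v}
      ≤ #{p ∈ 𝒜.image fun I => relArc v (c I) | p.1 = 0} := by
        refine card_le_card_of_injOn _ (fun I hI => ?_)
          ((hc.injOn_relArc v).mono (filter_subset _ _))
        obtain ⟨hI𝒜, rfl⟩ := mem_filter.1 hI
        exact mem_filter.2 ⟨mem_image_of_mem _ hI𝒜, by simp [relArc]⟩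
    _ ≤ 2 := (hc.isArcCore_image hS hstart hend v).card_filter_start_zero_le_two

theorem card_filter_end_le_two [NeZero n] (hc : IsArcCode σ 𝒜 c)
    (hS : ¬ ContainsSkewButterfly 𝒜)
    (hstart : ∀ I ∈ 𝒜, ∃ J ∈ 𝒜, J ≠ I ∧ (c J).1 = (c I).1)
    (hend : ∀ I ∈ 𝒜, ∃ J ∈ 𝒜, J ≠ I ∧ arcEnd (c J) = arcEnd (c I)) (w : ZMod n) :
    #{I ∈ 𝒜 | arcEnd (c I) = w} ≤ 2 := by
  have hstart' : ∀ I ∈ 𝒜, ∃ J ∈ 𝒜, J ≠ I ∧ -arcEnd (c J) = -arcEnd (c I) := fun I hI => by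
    obtain ⟨J, hJ, hJI, h⟩ := hend I hI
    exact ⟨J, hJ, hJI, by rw [h]⟩
  have hend' : ∀ I ∈ 𝒜, ∃ J ∈ 𝒜, J ≠ I ∧
      arcEnd (-arcEnd (c J), (c J).2) = arcEnd (-arcEnd (c I), (c I).2) := fun I hI => by
    obtain ⟨J, hJ, hJI, h⟩ := hstart I hI
    exact ⟨J, hJ, hJI, by simp only [arcEnd, h]; ring⟩
  simpa only [neg_inj] using hc.reverse.card_filter_start_le_two hS hstart' hend' (-w)

end IsArcCode

end ArcCode

/-- A skew-butterfly-free collection of intervals along a cyclic permutation of `[n]`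
has at most `2n` members. -/
theorem skew_butterfly_intervals_bound (n : ℕ) (σ : ZMod n ≃ Fin n)
    (𝒜 : Finset (Finset (Fin n))) (hInt : ∀ I ∈ 𝒜, IsCycInterval n σ I)
    (hS : ¬ ContainsSkewButterfly 𝒜) :
    𝒜.card ≤ 2 * n := by
  rcases Nat.eq_zero_or_pos n with rfl | hn
  · exact (σ 0).elim0
  have : NeZero n := ⟨hn.ne'⟩
  obtain ⟨c, hc⟩ := exists_isArcCode hInt
  calc #𝒜 ≤ #(𝒜.image fun I => (c I).1) + #(𝒜.image fun I => arcEnd (c I)) :=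
        card_le_card_image_add_card_image _ _ 𝒜 fun ℬ hℬ hstart hend => by
          have hSℬ : ¬ ContainsSkewButterfly ℬ := fun h => hS (HasSkewButterfly.mono hℬ h)
          exact ⟨(hc.mono hℬ).card_filter_start_le_two hSℬ hstart hend,
            (hc.mono hℬ).card_filter_end_le_two hSℬ hstart hend⟩
    _ ≤ n + n := by
        gcongr <;> exact (card_le_univ _).trans (ZMod.card n).le
    _ = 2 * n := (two_mul n).symm
end

section
/- Let σ be a cyclic permutation of [n], let C_1, …, C_n be the chain decomposition of the intervals along σ, and let A be a collection of intervals along σ that does not contain the skew-butterfly poset S as a weak subposet. If C_i is of type 4, type 3^R or type 3^S and |A ∩ C_{i+1}| = 1, then C_{i+2} is of type 0, 1, 2 or 3^R (indices of chains taken modulo n); equivalently, |A ∩ C_{i+2}| ≤ 3, and C_{i+2} is neither of type 4, type 3^L nor type 3^S. -/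
/-!
The interval of size `m` on the chain `C (i + δ)` is the image of the integer interval
`[δ - ⌊m/2⌋, δ - ⌊m/2⌋ + m)` under `k ↦ x (i + k)`, so inclusions between sets on `C i`,
`C (i+1)` and `C (i+2)` follow from inequalities between `⌊m/2⌋`, `⌈m/2⌉` and the offsets `δ`.
If `C i` is of type `4`, `3^R` or `3^S`, it carries sets of sizes `x₁ < x₂ < x₃` that are not
three consecutive integers starting at an even one; if `C (i+2)` were of type `≥ 4`, `3^L` or
`3^S`, it would carry sets of sizes `t₁ < t₂ < t₃` that are not three consecutive integers
starting at an odd one. Together with the set on `C (i+1)`, a short case analysis on these sizes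
always produces a skew butterfly among the seven sets.
-/

open Finset

/-- The chain `C i` of the chain decomposition of the intervals along `σ`: it contains
exactly one interval of each size `1, 2, …, n - 1`, where the interval of size `2k` is
`{x (i-k), …, x (i+k-1)}` and the interval of size `2k+1` is `{x (i-k), …, x (i+k)}`. -/
def chainC (n : ℕ) (σ : ZMod n ≃ Fin n) (i : ZMod n) : Finset (Finset (Fin n)) :=
  (Finset.Icc 1 (n - 1)).image fun m => cycInterval n σ (i - ((m / 2 : ℕ) : ZMod n)) (m - 1)

/-- The chain `C` is of type `3^S`: exactly `3` sets of `𝒜` on `C`, whose sizes are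
not consecutive. -/
def Type3S {n : ℕ} (𝒜 C : Finset (Finset (Fin n))) : Prop :=
  (𝒜 ∩ C).card = 3 ∧ ¬ ∃ j : ℕ, (𝒜 ∩ C).image Finset.card = {j, j + 1, j + 2}

/-- The chain `C` is of type `3^R`: exactly `3` sets of `𝒜` on `C`, with consecutive sizes
`j, j+1, j+2` where `j` is odd (two of the sets have odd size). -/
def Type3R {n : ℕ} (𝒜 C : Finset (Finset (Fin n))) : Prop :=
  (𝒜 ∩ C).card = 3 ∧ ∃ j : ℕ, Odd j ∧ (𝒜 ∩ C).image Finset.card = {j, j + 1, j + 2}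

/-- The chain `C` is of type `3^L`: exactly `3` sets of `𝒜` on `C`, with consecutive sizes
`j, j+1, j+2` where `j` is even (two of the sets have even size). -/
def Type3L {n : ℕ} (𝒜 C : Finset (Finset (Fin n))) : Prop :=
  (𝒜 ∩ C).card = 3 ∧ ∃ j : ℕ, Even j ∧ (𝒜 ∩ C).image Finset.card = {j, j + 1, j + 2}

variable {n : ℕ}

lemma ZMod.natCast_inj_of_lt {s s' : ℕ} (hs : s < n) (hs' : s' < n) :
    (s : ZMod n) = s' ↔ s = s' := by
  rw [ZMod.natCast_eq_natCast_iff', Nat.mod_eq_of_lt hs, Nat.mod_eq_of_lt hs']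

section CycInterval

variable (σ : ZMod n ≃ Fin n) {a b : ZMod n} {t t' : ℕ}

lemma mem_cycInterval_s8 {x : Fin n} : x ∈ cycInterval n σ a t ↔ ∃ s ≤ t, σ (a + s) = x := by
  simp [cycInterval]

lemma card_cycInterval (ht : t < n) : (cycInterval n σ a t).card = t + 1 := by
  rw [cycInterval, card_image_of_injOn, card_range]
  intro s hs s' hs' h
  simp only [coe_range, Set.mem_Iio] at hs hs'
  exact (ZMod.natCast_inj_of_lt (by omega) (by omega)).1 (add_left_cancel (σ.injective h))

lemma cycInterval_subset_cycInterval (d : ℕ) (hab : a = b + d) (h : d + t ≤ t') :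
    cycInterval n σ a t ⊆ cycInterval n σ b t' := by
  intro x hx
  obtain ⟨s, hs, rfl⟩ := (mem_cycInterval_s8 σ).1 hx
  exact (mem_cycInterval_s8 σ).2 ⟨d + s, by omega, by rw [hab]; push_cast; ring_nf⟩

lemma sub_one_notMem_cycInterval (ht : t + 2 ≤ n) : σ (a - 1) ∉ cycInterval n σ a t := by
  rw [mem_cycInterval_s8]
  rintro ⟨s, hs, h⟩
  have h0 : ((s + 1 : ℕ) : ZMod n) = ((0 : ℕ) : ZMod n) := by
    push_cast; linear_combination σ.injective h
  exact absurd ((ZMod.natCast_inj_of_lt (by omega) (by omega)).1 h0) (by omega)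

lemma eq_of_cycInterval_eq (ht : t + 2 ≤ n) (h : cycInterval n σ a t = cycInterval n σ b t) :
    a = b := by
  by_contra hab
  have ha : σ a ∈ cycInterval n σ b t := h ▸ (mem_cycInterval_s8 σ).2 ⟨0, by omega, by simp⟩
  obtain ⟨s, hs, hsa⟩ := (mem_cycInterval_s8 σ).1 ha
  have hs0 : s ≠ 0 := by rintro rfl; simp [σ.injective.eq_iff] at hsa; exact hab hsa.symm
  have hpred : σ (a - 1) ∈ cycInterval n σ b t := by
    refine (mem_cycInterval_s8 σ).2 ⟨s - 1, by omega, ?_⟩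
    rw [← σ.injective hsa, Nat.cast_sub (by omega)]
    ring_nf
  exact sub_one_notMem_cycInterval σ ht (h ▸ hpred)

end CycInterval

section Chain

variable (σ : ZMod n ≃ Fin n)

def chainElem (j : ZMod n) (m : ℕ) : Finset (Fin n) :=
  cycInterval n σ (j - (m / 2 : ℕ)) (m - 1)

variable {σ} {𝒜 : Finset (Finset (Fin n))} {j : ZMod n} {m : ℕ}

lemma card_chainElem (h0 : 0 < m) (hn : m < n) : (chainElem σ j m).card = m := by
  rw [chainElem, card_cycInterval σ (by omega)]
  omega

lemma mem_image_card_inter_chainC :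
    m ∈ (𝒜 ∩ chainC n σ j).image card ↔ 0 < m ∧ m < n ∧ chainElem σ j m ∈ 𝒜 := by
  simp only [chainC, mem_image, mem_inter, mem_Icc]
  constructor
  · rintro ⟨_, ⟨hA, k, hk, rfl⟩, rfl⟩
    rw [← chainElem, card_chainElem (by omega) (by omega)]
    exact ⟨by omega, by omega, hA⟩
  · rintro ⟨h0, hn, hA⟩
    exact ⟨_, ⟨hA, m, ⟨h0, by omega⟩, rfl⟩, card_chainElem h0 hn⟩

lemma card_image_card_inter_chainC :
    ((𝒜 ∩ chainC n σ j).image card).card = (𝒜 ∩ chainC n σ j).card := by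
  refine card_image_of_injOn ?_
  simp only [Set.InjOn, coe_inter, Set.mem_inter_iff, mem_coe, chainC, mem_image, mem_Icc]
  rintro _ ⟨-, k, hk, rfl⟩ _ ⟨-, k', hk', rfl⟩ h
  rw [← chainElem, ← chainElem, card_chainElem (by omega) (by omega),
    card_chainElem (by omega) (by omega)] at h
  rw [h]

lemma card_inter_chainC_le : (𝒜 ∩ chainC n σ j).card ≤ n - 1 := by
  calc (𝒜 ∩ chainC n σ j).card ≤ (Icc 1 (n - 1)).card :=
        (card_le_card inter_subset_right).trans card_image_le
    _ = n - 1 := by simp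

lemma eq_of_chainElem_add_eq {i : ZMod n} {δ δ' m m' : ℕ} (hδ : δ < n)
    (hδ' : δ' < n) (hm₀ : 0 < m) (hm : m < n) (hm₀' : 0 < m') (hm' : m' < n)
    (h : chainElem σ (i + δ) m = chainElem σ (i + δ') m') : δ = δ' ∧ m = m' := by
  have hmm' : m = m' := by
    rw [← card_chainElem (σ := σ) (j := i + δ) hm₀ hm, ← card_chainElem hm₀' hm', h]
  subst hmm'
  have hstart := eq_of_cycInterval_eq σ (by omega) h
  rw [sub_left_inj, add_right_inj] at hstart
  exact ⟨(ZMod.natCast_inj_of_lt hδ hδ').1 hstart, rfl⟩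

end Chain

section ParityTriple

def HasParityTriple (s : Finset ℕ) (r : ℕ) : Prop :=
  ∃ x₁ ∈ s, ∃ x₂ ∈ s, ∃ x₃ ∈ s, x₁ < x₂ ∧ x₂ < x₃ ∧ (x₂ = x₁ + 1 → x₃ = x₂ + 1 → x₁ % 2 = r)

variable {s : Finset ℕ} {r : ℕ}

lemma hasParityTriple_of_eq_consecutive {j : ℕ} (h : s = {j, j + 1, j + 2}) (hj : j % 2 = r) :
    HasParityTriple s r :=
  ⟨j, by simp [h], j + 1, by simp [h], j + 2, by simp [h], by omega, by omega, fun _ _ => hj⟩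

lemma hasParityTriple_of_card_eq_three (h : s.card = 3) (hs : ¬∃ j, s = {j, j + 1, j + 2}) :
    HasParityTriple s r := by
  set x := s.orderEmbOfFin h
  have hx : s = ({x 0, x 1, x 2} : Finset ℕ) := by
    conv_lhs => rw [← image_orderEmbOfFin_univ s h]
    simp [Fin.univ_succ, x]
  refine ⟨x 0, by simp [x], x 1, by simp [x], x 2, by simp [x], by simp, by simp, ?_⟩
  intro h₁ h₂
  exact (hs ⟨x 0, by rw [hx, h₂, h₁]⟩).elim

lemma hasParityTriple_of_four_le_card (hr : r < 2) (h : 4 ≤ s.card) : HasParityTriple s r := by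
  obtain ⟨u, hus, hu⟩ := exists_subset_card_eq h
  set y := u.orderEmbOfFin hu
  have hy : ∀ k, y k ∈ s := fun k => hus (orderEmbOfFin_mem u hu k)
  have h01 : y 0 < y 1 := by simp
  have h12 : y 1 < y 2 := by simp
  have h23 : y 2 < y 3 := by simp
  -- two overlapping consecutive triples start at integers of different parities
  by_cases hfirst : y 1 = y 0 + 1 → y 2 = y 1 + 1 → y 0 % 2 = r
  · exact ⟨y 0, hy 0, y 1, hy 1, y 2, hy 2, h01, h12, hfirst⟩
  · exact ⟨y 1, hy 1, y 2, hy 2, y 3, hy 3, h12, h23, by omega⟩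

end ParityTriple

section SkewButterfly

variable {α β : Type*}

def SkewButterflyIn (r : α → α → Prop) (P : α → Prop) : Prop :=
  ∃ a b c d e : α,
    P a ∧ P b ∧ P c ∧ P d ∧ P e ∧
    a ≠ b ∧ a ≠ c ∧ a ≠ d ∧ a ≠ e ∧ b ≠ c ∧ b ≠ d ∧ b ≠ e ∧ c ≠ d ∧ c ≠ e ∧ d ≠ e ∧
    r a c ∧ r a d ∧ r b c ∧ r b d ∧ r b e ∧ r e d

lemma containsSkewButterfly_iff {𝒜 : Finset (Finset (Fin n))} :
    ContainsSkewButterfly 𝒜 ↔ SkewButterflyIn (· ⊆ ·) (· ∈ 𝒜) :=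
  Iff.rfl

lemma SkewButterflyIn.map {r : α → α → Prop} {r' : β → β → Prop} {P : α → Prop} {Q : β → Prop}
    (f : α → β) (hf : Set.InjOn f {a | P a}) (hPQ : ∀ a, P a → Q (f a))
    (hr : ∀ a b, P a → P b → r a b → r' (f a) (f b)) (h : SkewButterflyIn r P) :
    SkewButterflyIn r' Q := by
  obtain ⟨a, b, c, d, e, ha, hb, hc, hd, he, hab, hac, had, hae, hbc, hbd, hbe, hcd, hce, hde,
    rac, rad, rbc, rbd, rbe, red⟩ := h
  have hne : ∀ {x y}, P x → P y → x ≠ y → f x ≠ f y := fun hx hy hxy hf' => hxy (hf hx hy hf')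
  exact ⟨f a, f b, f c, f d, f e, hPQ a ha, hPQ b hb, hPQ c hc, hPQ d hd, hPQ e he,
    hne ha hb hab, hne ha hc hac, hne ha hd had, hne ha he hae, hne hb hc hbc, hne hb hd hbd,
    hne hb he hbe, hne hc hd hcd, hne hc he hce, hne hd he hde, hr a c ha hc rac,
    hr a d ha hd rad, hr b c hb hc rbc, hr b d hb hd rbd, hr b e hb he rbe, hr e d he hd red⟩

end SkewButterfly

/-- `(δ, m)` encodes the interval of size `m` on the chain `C (i + δ)`, and `ChainPosLE` is
inclusion of the corresponding integer intervals `[δ - ⌊m/2⌋, δ - ⌊m/2⌋ + m)`. -/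
def ChainPosLE (p p' : ℕ × ℕ) : Prop :=
  p'.1 + p.2 / 2 ≤ p.1 + p'.2 / 2 ∧ p.1 + p.2 + p'.2 / 2 ≤ p'.1 + p'.2 + p.2 / 2

lemma chainElem_subset_chainElem (σ : ZMod n ≃ Fin n) (i : ZMod n) {p p' : ℕ × ℕ}
    (h : ChainPosLE p p') (hm : 0 < p.2) :
    chainElem σ (i + p.1) p.2 ⊆ chainElem σ (i + p'.1) p'.2 := by
  obtain ⟨δ, m⟩ := p
  obtain ⟨δ', m'⟩ := p'
  obtain ⟨h₁, h₂⟩ := h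
  refine cycInterval_subset_cycInterval σ (δ + m' / 2 - (δ' + m / 2)) ?_ (by omega)
  push_cast [Nat.cast_sub h₁]
  ring

lemma skewButterflyIn_chainPosLE {P : ℕ × ℕ → Prop} {s u : Finset ℕ} {q : ℕ}
    (hs : HasParityTriple s 1) (hsP : ∀ m ∈ s, P (0, m)) (hq : P (1, q))
    (hu : HasParityTriple u 0) (huP : ∀ m ∈ u, P (2, m)) : SkewButterflyIn ChainPosLE P := by
  obtain ⟨x₁, hx₁, x₂, hx₂, x₃, hx₃, hx₁₂, hx₂₃, hx⟩ := hs
  obtain ⟨t₁, ht₁, t₂, ht₂, t₃, ht₃, ht₁₂, ht₂₃, ht⟩ := hu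
  have hX₁ := hsP _ hx₁; have hX₂ := hsP _ hx₂; have hX₃ := hsP _ hx₃
  have hY₁ := huP _ ht₁; have hY₂ := huP _ ht₂; have hY₃ := huP _ ht₃
  have h13 : ChainPosLE (0, x₁) (2, t₃) ∨ ChainPosLE (2, t₁) (0, x₃) := by
    simp only [ChainPosLE]; omega
  by_cases hX : ChainPosLE (0, x₁) (2, t₃) <;> by_cases hY : ChainPosLE (2, t₁) (0, x₃)
  · exact ⟨(0, x₁), (2, t₁), (0, x₃), (2, t₃), (2, t₂), hX₁, hY₁, hX₃, hY₃, hY₂,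
      by simp only [ChainPosLE, ne_eq, Prod.mk.injEq] at *; omega⟩
  · have key :
        ChainPosLE (0, x₂) (2, t₃) ∧ ChainPosLE (0, x₁) (2, t₂) ∨
        ChainPosLE (0, x₁) (1, q) ∧ ChainPosLE (2, t₁) (1, q) ∨
        ChainPosLE (1, q) (2, t₃) ∧ ChainPosLE (1, q) (0, x₃) := by
      simp only [ChainPosLE] at *; omega
    rcases key with h | h | h
    · exact ⟨(0, x₂), (0, x₁), (0, x₃), (2, t₃), (2, t₂), hX₂, hX₁, hX₃, hY₃, hY₂,
        by simp only [ChainPosLE, ne_eq, Prod.mk.injEq] at *; omega⟩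
    · exact ⟨(0, x₁), (2, t₁), (1, q), (2, t₃), (2, t₂), hX₁, hY₁, hq, hY₃, hY₂,
        by simp only [ChainPosLE, ne_eq, Prod.mk.injEq] at *; omega⟩
    · exact ⟨(1, q), (0, x₁), (2, t₃), (0, x₃), (0, x₂), hq, hX₁, hY₃, hX₃, hX₂,
        by simp only [ChainPosLE, ne_eq, Prod.mk.injEq] at *; omega⟩
  · have key :
        ChainPosLE (2, t₁) (0, x₂) ∧ ChainPosLE (2, t₂) (0, x₃) ∨
        ChainPosLE (1, q) (0, x₃) ∧ ChainPosLE (1, q) (2, t₃) ∨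
        ChainPosLE (2, t₁) (1, q) ∧ ChainPosLE (0, x₁) (1, q) := by
      simp only [ChainPosLE] at *; omega
    rcases key with h | h | h
    · exact ⟨(0, x₁), (2, t₁), (0, x₂), (0, x₃), (2, t₂), hX₁, hY₁, hX₂, hX₃, hY₂,
        by simp only [ChainPosLE, ne_eq, Prod.mk.injEq] at *; omega⟩
    · exact ⟨(1, q), (2, t₁), (0, x₃), (2, t₃), (2, t₂), hq, hY₁, hX₃, hY₃, hY₂,
        by simp only [ChainPosLE, ne_eq, Prod.mk.injEq] at *; omega⟩
    · exact ⟨(2, t₁), (0, x₁), (1, q), (0, x₃), (0, x₂), hY₁, hX₁, hq, hX₃, hX₂,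
        by simp only [ChainPosLE, ne_eq, Prod.mk.injEq] at *; omega⟩
  · exact (h13.elim hX hY).elim

lemma containsSkewButterfly_of_chainPos (σ : ZMod n ≃ Fin n) (i : ZMod n)
    {𝒜 : Finset (Finset (Fin n))}
    (h : SkewButterflyIn ChainPosLE
      fun p : ℕ × ℕ => p.1 < n ∧ p.2 ∈ (𝒜 ∩ chainC n σ (i + p.1)).image card) :
    ContainsSkewButterfly 𝒜 := by
  have hP : ∀ p : ℕ × ℕ, (p.1 < n ∧ p.2 ∈ (𝒜 ∩ chainC n σ (i + p.1)).image card) →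
      p.1 < n ∧ 0 < p.2 ∧ p.2 < n ∧ chainElem σ (i + p.1) p.2 ∈ 𝒜 :=
    fun p hp => ⟨hp.1, mem_image_card_inter_chainC.1 hp.2⟩
  refine h.map (r' := (· ⊆ ·)) (Q := (· ∈ 𝒜))
    (fun p : ℕ × ℕ => chainElem σ (i + p.1) p.2) ?_ ?_ ?_
  · rintro ⟨δ, m⟩ hp ⟨δ', m'⟩ hp' heq
    obtain ⟨hδ, hm₀, hm, -⟩ := hP _ hp
    obtain ⟨hδ', hm₀', hm', -⟩ := hP _ hp'
    obtain ⟨rfl, rfl⟩ := eq_of_chainElem_add_eq hδ hδ' hm₀ hm hm₀' hm' heq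
    rfl
  · exact fun p hp => (hP p hp).2.2.2
  · exact fun p p' hp _ hle => chainElem_subset_chainElem σ i hle (hP p hp).2.1

theorem skew_butterfly_chain_lemma2_general (n : ℕ) (σ : ZMod n ≃ Fin n)
    (𝒜 : Finset (Finset (Fin n)))
    (hS : ¬ ContainsSkewButterfly 𝒜) (i : ZMod n)
    (hi : (𝒜 ∩ chainC n σ i).card = 4 ∨ Type3R 𝒜 (chainC n σ i) ∨ Type3S 𝒜 (chainC n σ i))
    (hmid : (𝒜 ∩ chainC n σ (i + 1)).card = 1) :
    (𝒜 ∩ chainC n σ (i + 2)).card ≤ 3 ∧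
      ¬ (𝒜 ∩ chainC n σ (i + 2)).card = 4 ∧
      ¬ Type3L 𝒜 (chainC n σ (i + 2)) ∧ ¬ Type3S 𝒜 (chainC n σ (i + 2)) := by
  have hn : 3 ≤ n := by
    have := card_inter_chainC_le (𝒜 := 𝒜) (σ := σ) (j := i)
    rcases hi with h | ⟨h, -⟩ | ⟨h, -⟩ <;> omega
  have hX : HasParityTriple ((𝒜 ∩ chainC n σ i).image card) 1 := by
    rcases hi with h | ⟨-, j, hj, hs⟩ | ⟨h, hs⟩
    · exact hasParityTriple_of_four_le_card one_lt_two (by rw [card_image_card_inter_chainC, h])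
    · exact hasParityTriple_of_eq_consecutive hs (Nat.odd_iff.mp hj)
    · exact hasParityTriple_of_card_eq_three (by rw [card_image_card_inter_chainC, h]) hs
  obtain ⟨q, hq⟩ : ((𝒜 ∩ chainC n σ (i + 1)).image card).Nonempty := by
    rw [← card_pos, card_image_card_inter_chainC, hmid]
    exact one_pos
  have hY : ¬ HasParityTriple ((𝒜 ∩ chainC n σ (i + 2)).image card) 0 := fun hY =>
    hS <| containsSkewButterfly_of_chainPos σ i <| skewButterflyIn_chainPosLE hX
      (fun m hm => ⟨by omega, by simpa only [Nat.cast_zero, add_zero] using hm⟩)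
      ⟨by omega, by simpa only [Nat.cast_one] using hq⟩ hY
      (fun m hm => ⟨by omega, by simpa only [Nat.cast_ofNat] using hm⟩)
  have h3 : (𝒜 ∩ chainC n σ (i + 2)).card ≤ 3 := by
    by_contra! h
    exact hY (hasParityTriple_of_four_le_card two_pos (by rw [card_image_card_inter_chainC]; omega))
  refine ⟨h3, by omega, ?_, ?_⟩
  · rintro ⟨-, j, hj, hs⟩
    exact hY (hasParityTriple_of_eq_consecutive hs (Nat.even_iff.mp hj))
  · rintro ⟨h, hs⟩
    exact hY (hasParityTriple_of_card_eq_three (by rw [card_image_card_inter_chainC, h]) hs)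

/-- If `C i` is of type `4`, `3^R` or `3^S` and `|𝒜 ∩ C (i+1)| = 1`, then `C (i+2)` is of
type `0`, `1`, `2` or `3^R`; i.e. `|𝒜 ∩ C (i+2)| ≤ 3` and `C (i+2)` is neither of type `4`
nor `3^L` nor `3^S`. -/
theorem skew_butterfly_chain_lemma2 (n : ℕ) (σ : ZMod n ≃ Fin n)
    (𝒜 : Finset (Finset (Fin n))) (hInt : ∀ I ∈ 𝒜, IsCycInterval n σ I)
    (hS : ¬ ContainsSkewButterfly 𝒜) (i : ZMod n)
    (hi : (𝒜 ∩ chainC n σ i).card = 4 ∨ Type3R 𝒜 (chainC n σ i) ∨ Type3S 𝒜 (chainC n σ i))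
    (hmid : (𝒜 ∩ chainC n σ (i + 1)).card = 1) :
    (𝒜 ∩ chainC n σ (i + 2)).card ≤ 3 ∧
      ¬ (𝒜 ∩ chainC n σ (i + 2)).card = 4 ∧
      ¬ Type3L 𝒜 (chainC n σ (i + 2)) ∧ ¬ Type3S 𝒜 (chainC n σ (i + 2)) :=
  skew_butterfly_chain_lemma2_general n σ 𝒜 hS i hi hmid
end
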